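/- arXiv:2208.11256 — 5 statements merged into one kernel-verified Lean document; each statement's English description precedes it below -/
import Mathlib

section
/- Let (𝔫, ⟨·,·⟩) be a metric Lie algebra with 𝔫 nilpotent, ⟨·,·⟩ Lorentz, and suppose the restriction of ⟨·,·⟩ to the derived algebra [𝔫,𝔫] is nondegenerate. If (𝔫, ⟨·,·⟩) satisfies the GO condition, then [[𝔫,𝔫],𝔫] = 0, i.e. 𝔫 is abelian or 2-step nilpotent. -/
set_option linter.unusedSectionVars false
set_option maxHeartbeats 3000000


/-- `D` is a skew-symmetric derivation of the metric Lie algebra `(𝔫, B)`. -/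
def IsSkewDeriv {n : Type*} [LieRing n] [LieAlgebra ℝ n]
    (B : LinearMap.BilinForm ℝ n) (D : n →ₗ[ℝ] n) : Prop :=
  (∀ X Y : n, D ⁅X, Y⁆ = ⁅D X, Y⁆ + ⁅X, D Y⁆) ∧
  (∀ X Y : n, B (D X) Y + B X (D Y) = 0)

/-- The GO condition for a metric Lie algebra `(𝔫, B)`: for every `T` there are a
skew-symmetric derivation `A` and `k ∈ ℝ` with `⟨[T,T'] + A(T'), T⟩ = k⟨T,T'⟩` for all `T'`. -/
def IsGO {n : Type*} [LieRing n] [LieAlgebra ℝ n] (B : LinearMap.BilinForm ℝ n) : Prop :=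
  ∀ T : n, ∃ (A : n →ₗ[ℝ] n) (k : ℝ), IsSkewDeriv B A ∧
    ∀ T' : n, B (⁅T, T'⁆ + A T') T = k * B T T'

/-- A symmetric bilinear form is Lorentz: there is an orthogonal basis in which exactly one
basis vector has negative norm-square and all others have positive norm-square. -/
def IsLorentz {V : Type*} [AddCommGroup V] [Module ℝ V] (B : LinearMap.BilinForm ℝ V) : Prop :=
  ∃ (m : ℕ) (b : Module.Basis (Fin (m + 1)) ℝ V) (i₀ : Fin (m + 1)),
    (∀ i j, i ≠ j → B (b i) (b j) = 0) ∧ B (b i₀) (b i₀) < 0 ∧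
    ∀ i, i ≠ i₀ → 0 < B (b i) (b i)

/-- The derived algebra `[𝔫,𝔫]`, as a submodule of `𝔫`. -/
def derived (n : Type*) [LieRing n] [LieAlgebra ℝ n] : Submodule ℝ n :=
  Submodule.span ℝ {z : n | ∃ X Y : n, ⁅X, Y⁆ = z}

namespace Stmt0

variable {n : Type*} [LieRing n] [LieAlgebra ℝ n]

/-- Lower central series as submodules: `C 0 = ⊤`, `C (j+1) = span ⁅n, C j⁆`. -/
def C (n : Type*) [LieRing n] [LieAlgebra ℝ n] : ℕ → Submodule ℝ n
  | 0 => ⊤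
  | (j+1) => Submodule.span ℝ {z : n | ∃ U c : n, c ∈ C n j ∧ ⁅U, c⁆ = z}

lemma C_succ_eq (j : ℕ) :
    C n (j+1) = Submodule.span ℝ {z : n | ∃ U c : n, c ∈ C n j ∧ ⁅U, c⁆ = z} := rfl

lemma lie_mem_C_succ {j : ℕ} (U : n) {c : n} (hc : c ∈ C n j) : ⁅U, c⁆ ∈ C n (j+1) :=
  Submodule.subset_span ⟨U, c, hc, rfl⟩

lemma lie_mem_C_succ' {j : ℕ} {c : n} (hc : c ∈ C n j) (U : n) : ⁅c, U⁆ ∈ C n (j+1) := by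
  rw [← lie_skew]
  exact (C n (j+1)).neg_mem (lie_mem_C_succ U hc)

lemma C_succ_le {j : ℕ} : C n (j+1) ≤ C n j := by
  induction j with
  | zero => exact le_top
  | succ j ih =>
    rw [C_succ_eq (j+1)]
    refine Submodule.span_le.2 ?_
    rintro z ⟨U, c, hc, rfl⟩
    exact lie_mem_C_succ U (ih hc)

lemma C_le_of_le {i j : ℕ} (h : j ≤ i) : C n i ≤ C n j := by
  induction h with
  | refl => exact le_rfl
  | step _ ih => exact le_trans C_succ_le ih

lemma derived_eq : derived n = C n 1 := by
  have : {z : n | ∃ X Y : n, ⁅X, Y⁆ = z} = {z : n | ∃ U c : n, c ∈ C n 0 ∧ ⁅U, c⁆ = z} := by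
    ext z
    constructor
    · rintro ⟨X, Y, rfl⟩; exact ⟨X, Y, trivial, rfl⟩
    · rintro ⟨U, c, _, rfl⟩; exact ⟨U, c, rfl⟩
  rw [derived, this]; rfl

lemma bracket_mem_C1 (X Y : n) : ⁅X, Y⁆ ∈ C n 1 :=
  lie_mem_C_succ X (by trivial : Y ∈ C n 0)

lemma C_le_lcs (k : ℕ) :
    C n k ≤ ((LieModule.lowerCentralSeries ℝ n n k : LieSubmodule ℝ n n) : Submodule ℝ n) := by
  induction k with
  | zero => simp [C]
  | succ k ih =>
    rw [C_succ_eq]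
    refine Submodule.span_le.2 ?_
    rintro z ⟨U, c, hc, rfl⟩
    have hc' : c ∈ LieModule.lowerCentralSeries ℝ n n k := ih hc
    have : ⁅U, c⁆ ∈ LieModule.lowerCentralSeries ℝ n n (k+1) := by
      rw [LieModule.lowerCentralSeries_succ]
      exact LieSubmodule.lie_mem_lie (LieSubmodule.mem_top _) hc'
    exact this

lemma exists_C_eq_bot [LieRing.IsNilpotent n] : ∃ N, C n N = ⊥ := by
  obtain ⟨N, hN⟩ := LieModule.IsNilpotent.nilpotent (R := ℝ) (L := n) (M := n)
  refine ⟨N, le_bot_iff.1 ?_⟩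
  have := C_le_lcs (n := n) N
  rw [hN] at this
  simpa using this

/-- `⁅C 1, C 1⁆ ⊆ C 3`. -/
lemma lie_C1_C1_mem {z w : n} (hz : z ∈ C n 1) (hw : w ∈ C n 1) : ⁅z, w⁆ ∈ C n 3 := by
  induction hw using Submodule.span_induction with
  | mem x hx =>
    obtain ⟨U, c, _, rfl⟩ := hx
    have key : ⁅z, ⁅U, c⁆⁆ = ⁅⁅z, U⁆, c⁆ + ⁅U, ⁅z, c⁆⁆ := by
      rw [leibniz_lie]
    rw [key]
    refine (C n 3).add_mem ?_ ?_
    · have h1 : ⁅z, U⁆ ∈ C n 2 := lie_mem_C_succ' hz U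
      exact lie_mem_C_succ' h1 c
    · have h2 : ⁅z, c⁆ ∈ C n 2 := lie_mem_C_succ' hz c
      exact lie_mem_C_succ U h2
  | zero => simp
  | add x y hx hy ihx ihy => rw [lie_add]; exact (C n 3).add_mem ihx ihy
  | smul a x hx ihx => rw [lie_smul]; exact (C n 3).smul_mem a ihx


variable {B : LinearMap.BilinForm ℝ n}

section Basis

variable {m : ℕ} (b : Module.Basis (Fin (m + 1)) ℝ n) (i₀ : Fin (m + 1))
variable (horth : ∀ i j, i ≠ j → B (b i) (b j) = 0)

include horth in
lemma apply_eq_sum (x y : n) :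
    B x y = ∑ i, (b.repr x i) * (b.repr y i) * B (b i) (b i) := by
  have h2 : ∀ i, B (b i) y = (b.repr y i) * B (b i) (b i) := by
    intro i
    conv_lhs => rw [← b.sum_repr y]
    rw [map_sum]
    simp only [map_smul, smul_eq_mul]
    rw [Finset.sum_eq_single i]
    · intro j _ hji
      rw [horth i j (Ne.symm hji), mul_zero]
    · intro h; exact absurd (Finset.mem_univ i) h
  have h1 : B x y = ∑ i, (b.repr x i) * B (b i) y := by
    conv_lhs => rw [← b.sum_repr x]
    rw [map_sum]
    simp only [map_smul, LinearMap.smul_apply, LinearMap.sum_apply, smul_eq_mul]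
  rw [h1]
  refine Finset.sum_congr rfl (fun i _ => ?_)
  rw [h2 i, mul_assoc]

variable (hneg : B (b i₀) (b i₀) < 0) (hpos : ∀ i, i ≠ i₀ → 0 < B (b i) (b i))

include horth hpos in
lemma nonneg_of_coord_zero {x : n} (hx : b.repr x i₀ = 0) :
    0 ≤ B x x ∧ (B x x = 0 → x = 0) := by
  have hexp := apply_eq_sum b horth x x
  have hterm : ∀ i ∈ Finset.univ, (0:ℝ) ≤ (b.repr x i) * (b.repr x i) * B (b i) (b i) := by
    intro i _
    rcases eq_or_ne i i₀ with rfl | hi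
    · rw [hx]; simp
    · exact mul_nonneg (mul_self_nonneg _) (le_of_lt (hpos i hi))
  constructor
  · rw [hexp]; exact Finset.sum_nonneg hterm
  · intro h0
    rw [hexp] at h0
    have hall := (Finset.sum_eq_zero_iff_of_nonneg hterm).1 h0
    have hco : ∀ i, b.repr x i = 0 := by
      intro i
      rcases eq_or_ne i i₀ with rfl | hi
      · exact hx
      · have := hall i (Finset.mem_univ i)
        have hbi := hpos i hi
        have : (b.repr x i) * (b.repr x i) = 0 := by
          by_contra hne
          exact hne (by
            have := mul_eq_zero.1 this
            rcases this with h | h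
            · exact h
            · exact absurd h (ne_of_gt hbi))
        nlinarith [this]
    have : b.repr x = 0 := Finsupp.ext hco
    simpa using (b.repr.map_eq_zero_iff).1 this

end Basis

variable (hL : IsLorentz B) (hsymm : ∀ X Y : n, B X Y = B Y X)

include hL hsymm in
/-- In a Lorentz space, the orthogonal of a nonzero null vector is positive semidefinite with
radical the line spanned by the null vector. -/
lemma lorentz_null_orthogonal {u : n} (hu0 : B u u = 0) (hune : u ≠ 0) {w : n}
    (huw : B u w = 0) : 0 ≤ B w w ∧ (B w w = 0 → ∃ c : ℝ, w = c • u) := by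
  obtain ⟨m, b, i₀, horth, hneg, hpos⟩ := hL
  have hui : b.repr u i₀ ≠ 0 := by
    intro h
    exact hune (((nonneg_of_coord_zero b i₀ horth hpos h).2) hu0)
  set r : ℝ := (b.repr w i₀) / (b.repr u i₀) with hr
  set z : n := w - r • u with hz
  have hzc : b.repr z i₀ = 0 := by
    rw [hz, map_sub, map_smul]
    simp only [Finsupp.coe_sub, Finsupp.coe_smul, Pi.sub_apply, Pi.smul_apply, smul_eq_mul]
    rw [hr, div_mul_cancel₀ _ hui, sub_self]
  have hzz : B z z = B w w := by
    have hwu : B w u = 0 := by rw [hsymm]; exact huw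
    rw [hz]
    simp only [map_sub, map_smul, LinearMap.sub_apply, LinearMap.smul_apply, smul_eq_mul]
    rw [hwu, huw, hu0]; ring
  have hmain := nonneg_of_coord_zero b i₀ horth hpos hzc
  constructor
  · rw [← hzz]; exact hmain.1
  · intro h0
    have : z = 0 := hmain.2 (by rw [hzz]; exact h0)
    exact ⟨r, by rw [← sub_eq_zero]; exact this⟩

include hL hsymm in
/-- In a Lorentz space there are no two orthogonal negative vectors. -/
lemma lorentz_no_two_neg {x y : n} (hx : B x x < 0) (hy : B y y < 0) (hxy : B x y = 0) :
    False := by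
  obtain ⟨m, b, i₀, horth, hneg, hpos⟩ := hL
  have hxi : b.repr x i₀ ≠ 0 := by
    intro h
    exact absurd ((nonneg_of_coord_zero b i₀ horth hpos h).1) (not_le.2 hx)
  set r : ℝ := (b.repr y i₀) / (b.repr x i₀) with hr
  set z : n := y - r • x with hz
  have hzc : b.repr z i₀ = 0 := by
    rw [hz, map_sub, map_smul]
    simp only [Finsupp.coe_sub, Finsupp.coe_smul, Pi.sub_apply, Pi.smul_apply, smul_eq_mul]
    rw [hr, div_mul_cancel₀ _ hxi, sub_self]
  have hyx : B y x = 0 := by rw [hsymm]; exact hxy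
  have hzz : B z z = B y y + r^2 * B x x := by
    rw [hz]
    simp only [map_sub, map_smul, LinearMap.sub_apply, LinearMap.smul_apply, smul_eq_mul]
    rw [hyx, hxy]; ring
  have := (nonneg_of_coord_zero b i₀ horth hpos hzc).1
  nlinarith [sq_nonneg r]


section Deriv

variable {A : n →ₗ[ℝ] n} (hA : IsSkewDeriv B A)
variable (hsymm : ∀ X Y : n, B X Y = B Y X)

include hA hsymm in
lemma skew_self (x : n) : B (A x) x = 0 := by
  have h := hA.2 x x
  have h2 : B x (A x) = B (A x) x := hsymm x (A x)
  linarith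

include hA in
lemma skewDeriv_C_mem : ∀ (j : ℕ) (x : n), x ∈ C n j → A x ∈ C n j := by
  intro j
  induction j with
  | zero => intro x _; trivial
  | succ j ih =>
    intro x hx
    induction hx using Submodule.span_induction with
    | mem z hz =>
      obtain ⟨U, c, hc, rfl⟩ := hz
      rw [hA.1 U c]
      exact (C n (j+1)).add_mem (lie_mem_C_succ (A U) hc) (lie_mem_C_succ U (ih _ hc))
    | zero => rw [map_zero]; exact (C n (j+1)).zero_mem
    | add x y _ _ ihx ihy => rw [map_add]; exact (C n (j+1)).add_mem ihx ihy
    | smul a x _ ihx => rw [map_smul]; exact (C n (j+1)).smul_mem a ihx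

include hA in
lemma skewDeriv_orth_mem {x : n} (hx : x ∈ B.orthogonal (C n 1)) :
    A x ∈ B.orthogonal (C n 1) := by
  rw [LinearMap.BilinForm.mem_orthogonal_iff] at hx ⊢
  intro y hy
  have h1 : B (A y) x = 0 := hx (A y) (skewDeriv_C_mem hA 1 y hy)
  have h2 := hA.2 y x
  linarith [h1, h2]

end Deriv

section Setup

variable [FiniteDimensional ℝ n]
variable (hsymm : ∀ X Y : n, B X Y = B Y X)
variable (hndC1 : ∀ x ∈ C n 1, (∀ y ∈ C n 1, B x y = 0) → x = 0)

include hsymm in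
lemma hrefl : B.IsRefl := fun x y h => by rw [hsymm]; exact h

include hsymm hndC1 in
lemma hisCompl : IsCompl (C n 1) (B.orthogonal (C n 1)) := by
  refine LinearMap.BilinForm.isCompl_orthogonal_of_restrict_nondegenerate (hrefl hsymm) ?_
  refine ⟨fun x hx => Subtype.ext (hndC1 x.1 x.2 (fun y hy => hx ⟨y, hy⟩)),
    fun x hx => Subtype.ext (hndC1 x.1 x.2 (fun y hy => by rw [hsymm]; exact hx ⟨y, hy⟩))⟩

include hsymm hndC1 in
lemma exists_decomp (T : n) :
    ∃ X ∈ B.orthogonal (C n 1), ∃ Z ∈ C n 1, T = X + Z := by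
  have h : T ∈ (C n 1) ⊔ (B.orthogonal (C n 1)) := by
    rw [(hisCompl hsymm hndC1).sup_eq_top]; trivial
  obtain ⟨z, hz, x, hx, hT⟩ := Submodule.mem_sup.1 h
  exact ⟨x, hx, z, hz, by rw [← hT, add_comm]⟩

lemma orth_pair {x z : n} (hx : x ∈ B.orthogonal (C n 1)) (hz : z ∈ C n 1) :
    B z x = 0 := (LinearMap.BilinForm.mem_orthogonal_iff.1 hx) z hz

include hsymm in
lemma orth_pair' {x z : n} (hx : x ∈ B.orthogonal (C n 1)) (hz : z ∈ C n 1) :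
    B x z = 0 := by rw [hsymm]; exact orth_pair hx hz

end Setup


section C4

variable [FiniteDimensional ℝ n]
variable (hGO : IsGO B)

include hsymm hGO in
lemma L1 : ∀ X ∈ B.orthogonal (C n 1), ∀ Z ∈ C n 1, B ⁅X, Z⁆ Z = 0 := by
  intro X hX Z hZ
  have key : ∀ t : ℝ, ∃ k : ℝ, t * (B ⁅X, Z⁆ Z) = k * (B Z Z) ∧
      -(B ⁅X, Z⁆ Z) = k * (t * (B X X)) := by
    intro t
    obtain ⟨A, k, hA, hid⟩ := hGO (t • X + Z)
    have hXZ1 : ⁅X, Z⁆ ∈ C n 1 := bracket_mem_C1 X Z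
    have hAZ1 : A Z ∈ C n 1 := skewDeriv_C_mem hA 1 Z hZ
    have hAX : A X ∈ B.orthogonal (C n 1) := skewDeriv_orth_mem hA hX
    refine ⟨k, ?_, ?_⟩
    · have h := hid Z
      have e1 : ⁅t • X + Z, Z⁆ = t • ⁅X, Z⁆ := by
        rw [add_lie, smul_lie, lie_self, add_zero]
      rw [e1] at h
      simp only [map_add, map_smul, LinearMap.add_apply, LinearMap.smul_apply,
        smul_eq_mul] at h
      rw [orth_pair hX hXZ1, orth_pair hX hAZ1, skew_self (hA := hA) (hsymm := hsymm) Z,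
        orth_pair' hsymm hX hZ] at h
      linear_combination h
    · have h := hid X
      have e1 : ⁅t • X + Z, X⁆ = -⁅X, Z⁆ := by
        rw [add_lie, smul_lie, lie_self, smul_zero, zero_add, ← lie_skew]
      rw [e1] at h
      simp only [map_add, map_neg, map_smul, LinearMap.add_apply, LinearMap.neg_apply,
        LinearMap.smul_apply, smul_eq_mul] at h
      rw [orth_pair hX hXZ1, skew_self (hA := hA) (hsymm := hsymm) X,
        orth_pair' hsymm hAX hZ, orth_pair hX hZ] at h
      linear_combination h
  obtain ⟨k1, e1, e2⟩ := key 1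
  obtain ⟨k2, e3, e4⟩ := key 2
  set c := B ⁅X, Z⁆ Z with hc
  set p := B X X with hp
  set q := B Z Z with hq
  have h1 : p * c + q * c = 0 := by linear_combination p * e1 - q * e2
  have h2 : -(c * q) = 4 * (c * p) := by linear_combination q * e4 - 2 * p * e3
  have hcp : c * p = 0 := by linear_combination (-1/3 : ℝ) * h1 + (-1/3 : ℝ) * h2
  have hcq : c * q = 0 := by linear_combination h1 - hcp
  have : c * c = 0 := by
    have h3 : c * c = c * (k1 * q) := by linear_combination c * e1
    rw [h3]
    calc c * (k1 * q) = k1 * (c * q) := by ring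
    _ = 0 := by rw [hcq]; ring
  exact mul_self_eq_zero.1 this

variable [LieRing.IsNilpotent n]
variable (hndC1 : ∀ x ∈ C n 1, (∀ y ∈ C n 1, B x y = 0) → x = 0)

include hsymm hGO hndC1 in
lemma skewAll : ∀ (U z w : n), z ∈ C n 1 → w ∈ C n 1 →
    B ⁅U, z⁆ w = -(B ⁅U, w⁆ z) := by
  set S : Submodule ℝ n :=
    { carrier := {U : n | ∀ z ∈ C n 1, ∀ w ∈ C n 1, B ⁅U, z⁆ w = -(B ⁅U, w⁆ z)}
      zero_mem' := by intro z _ w _; simp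
      add_mem' := by
        intro a b ha hb z hz w hw
        rw [add_lie, add_lie, map_add, map_add, LinearMap.add_apply, LinearMap.add_apply,
          ha z hz w hw, hb z hz w hw]
        ring
      smul_mem' := by
        intro t a ha z hz w hw
        rw [smul_lie, smul_lie, map_smul, map_smul, LinearMap.smul_apply, LinearMap.smul_apply,
          smul_eq_mul, smul_eq_mul, ha z hz w hw]
        ring } with hS
  have hmemS : ∀ U : n, U ∈ S ↔
      ∀ z ∈ C n 1, ∀ w ∈ C n 1, B ⁅U, z⁆ w = -(B ⁅U, w⁆ z) := fun U => Iff.rfl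
  -- the orthogonal complement is contained in S
  have hVS : B.orthogonal (C n 1) ≤ S := by
    intro X hX
    rw [hmemS]
    intro z hz w hw
    have h0 := L1 hsymm hGO X hX (z + w) ((C n 1).add_mem hz hw)
    simp only [lie_add, map_add, LinearMap.add_apply] at h0
    rw [L1 hsymm hGO X hX z hz, L1 hsymm hGO X hX w hw] at h0
    linarith [h0]
  -- S is closed under brackets
  have hSbr : ∀ U ∈ S, ∀ V ∈ S, ⁅U, V⁆ ∈ S := by
    intro U hU V hV
    rw [hmemS] at hU hV ⊢
    intro z hz w hw
    have hVz : ⁅V, z⁆ ∈ C n 1 := C_succ_le (lie_mem_C_succ V hz)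
    have hUz : ⁅U, z⁆ ∈ C n 1 := C_succ_le (lie_mem_C_succ U hz)
    have hVw : ⁅V, w⁆ ∈ C n 1 := C_succ_le (lie_mem_C_succ V hw)
    have hUw : ⁅U, w⁆ ∈ C n 1 := C_succ_le (lie_mem_C_succ U hw)
    have k1 : B ⁅U, ⁅V, z⁆⁆ w = B ⁅V, ⁅U, w⁆⁆ z := by
      rw [hU ⁅V, z⁆ hVz w hw]
      have h := hV z hz ⁅U, w⁆ hUw
      have h2 := hsymm ⁅U, w⁆ ⁅V, z⁆
      linarith
    have k2 : B ⁅V, ⁅U, z⁆⁆ w = B ⁅U, ⁅V, w⁆⁆ z := by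
      rw [hV ⁅U, z⁆ hUz w hw]
      have h := hU z hz ⁅V, w⁆ hVw
      have h2 := hsymm ⁅V, w⁆ ⁅U, z⁆
      linarith
    rw [lie_lie U V z, lie_lie U V w]
    simp only [map_sub, LinearMap.sub_apply]
    linarith [k1, k2]
  -- generation: ⊤ ≤ S
  have hgen : (⊤ : Submodule ℝ n) ≤ S := by
    have hbase : (⊤ : Submodule ℝ n) ≤ S ⊔ C n 1 := by
      have hsup := (hisCompl hsymm hndC1).sup_eq_top
      rw [← hsup]
      exact sup_le (le_sup_of_le_right le_rfl) (le_sup_of_le_left hVS)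
    have hstep : ∀ j : ℕ, (⊤ : Submodule ℝ n) ≤ S ⊔ C n j →
        (⊤ : Submodule ℝ n) ≤ S ⊔ C n (j+1) := by
      intro j hj
      have hC1le : C n 1 ≤ S ⊔ C n (j+1) := by
        rw [C_succ_eq 0]
        refine Submodule.span_le.2 ?_
        rintro x ⟨U, c, _, rfl⟩
        obtain ⟨s₁, hs₁, c₁, hc₁, hU⟩ := Submodule.mem_sup.1 (hj (Submodule.mem_top (x := U)))
        obtain ⟨s₂, hs₂, c₂, hc₂, hc⟩ := Submodule.mem_sup.1 (hj (Submodule.mem_top (x := c)))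
        have hexp : ⁅U, c⁆ = ⁅s₁, s₂⁆ + (⁅s₁, c₂⁆ + ⁅c₁, s₂⁆ + ⁅c₁, c₂⁆) := by
          rw [← hU, ← hc, add_lie, lie_add, lie_add]
          abel
        rw [hexp]
        refine Submodule.add_mem _ (Submodule.mem_sup_left (hSbr s₁ hs₁ s₂ hs₂))
          (Submodule.mem_sup_right ?_)
        refine Submodule.add_mem _ (Submodule.add_mem _ ?_ ?_) ?_
        · exact lie_mem_C_succ s₁ hc₂
        · exact lie_mem_C_succ' hc₁ s₂
        · exact lie_mem_C_succ c₁ hc₂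
      calc (⊤ : Submodule ℝ n) ≤ S ⊔ C n 1 := hbase
      _ ≤ S ⊔ (S ⊔ C n (j+1)) := sup_le_sup_left hC1le S
      _ = S ⊔ C n (j+1) := by rw [← sup_assoc, sup_idem]
    obtain ⟨N, hN⟩ := exists_C_eq_bot (n := n)
    have : ∀ j : ℕ, (⊤ : Submodule ℝ n) ≤ S ⊔ C n (j+1) := by
      intro j
      induction j with
      | zero => exact hbase
      | succ j ih => exact hstep (j+1) ih
    have hfin := this N
    have hCN : C n (N+1) = ⊥ := le_bot_iff.1 (le_trans C_succ_le (le_of_eq hN))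
    rw [hCN, sup_bot_eq] at hfin
    exact hfin
  intro U z w hz hw
  exact (hmemS U).1 (hgen (Submodule.mem_top)) z hz w hw

end C4

section C5

variable [FiniteDimensional ℝ n]
variable (hsk : ∀ (U z w : n), z ∈ C n 1 → w ∈ C n 1 → B ⁅U, z⁆ w = -(B ⁅U, w⁆ z))

include hsk hsymm in
lemma orth_transfer {i j : ℕ} (hi : 1 ≤ i) (hj : 1 ≤ j)
    (h : ∀ x ∈ C n i, ∀ y ∈ C n (j+1), B x y = 0) :
    ∀ x ∈ C n (i+1), ∀ y ∈ C n j, B x y = 0 := by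
  intro x hx
  induction hx using Submodule.span_induction with
  | mem z hz =>
    obtain ⟨U, c, hc, rfl⟩ := hz
    intro y hy
    have hc1 : c ∈ C n 1 := C_le_of_le hi hc
    have hy1 : y ∈ C n 1 := C_le_of_le hj hy
    rw [hsk U c y hc1 hy1]
    have hUy : ⁅U, y⁆ ∈ C n (j+1) := lie_mem_C_succ U hy
    rw [hsymm ⁅U, y⁆ c, h c hc ⁅U, y⁆ hUy]
    ring
  | zero => intro y _; simp
  | add a b _ _ iha ihb =>
    intro y hy
    rw [map_add, LinearMap.add_apply, iha y hy, ihb y hy]; ring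
  | smul t a _ iha =>
    intro y hy
    rw [map_smul, LinearMap.smul_apply, smul_eq_mul, iha y hy]; ring

lemma C_stab {j : ℕ} (h : C n (j+1) = C n j) : C n (j+2) = C n (j+1) := by
  rw [C_succ_eq (j+1), h, ← C_succ_eq j]
  exact h

include hL hsymm in
lemma isotropic_line {U : Submodule ℝ n} (h : ∀ x ∈ U, ∀ y ∈ U, B x y = 0)
    (hne : U ≠ ⊥) : ∃ u : n, u ≠ 0 ∧ u ∈ U ∧ U ≤ Submodule.span ℝ {u} := by
  obtain ⟨u, hu, hune⟩ := Submodule.exists_mem_ne_zero_of_ne_bot hne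
  refine ⟨u, hune, hu, ?_⟩
  intro y hy
  have h1 := (lorentz_null_orthogonal hL hsymm (h u hu u hu) hune (h u hu y hy)).2
    (h y hy y hy)
  obtain ⟨c, rfl⟩ := h1
  exact Submodule.smul_mem _ c (Submodule.mem_span_singleton_self u)

include hsk hL hsymm in
lemma excl_ge4 {s : ℕ} (hs : 4 ≤ s) (htop : C n (s+1) = ⊥) : C n s = ⊥ := by
  by_contra hne
  -- C (s-1) is totally isotropic
  have hiso : ∀ x ∈ C n (s-1), ∀ y ∈ C n (s-1), B x y = 0 := by
    have key : ∀ d : ℕ, d ≤ s - 2 → ∀ x ∈ C n (1+d), ∀ y ∈ C n (2*s-3-d), B x y = 0 := by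
      intro d
      induction d with
      | zero =>
        intro _ x _ y hy
        have : C n (2*s-3) ≤ C n (s+1) := C_le_of_le (by omega)
        rw [htop] at this
        have := this hy
        simp only [Submodule.mem_bot] at this
        rw [this, map_zero]
      | succ d ih =>
        intro hd x hx y hy
        have h1 := ih (by omega)
        have h2 : ∀ x ∈ C n (1+d), ∀ y ∈ C n ((2*s-3-(d+1))+1), B x y = 0 := by
          intro x hx y hy
          exact h1 x hx y (by rwa [show (2*s-3-(d+1))+1 = 2*s-3-d by omega] at hy)
        have h3 := orth_transfer (hsymm := hsymm) (hsk := hsk) (by omega : 1 ≤ 1+d) (by omega : 1 ≤ 2*s-3-(d+1)) h2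
        exact h3 x (by rwa [show 1+(d+1) = (1+d)+1 by omega] at hx) y hy
    intro x hx y hy
    have := key (s-2) le_rfl
    exact this x (by rwa [show s-1 = 1+(s-2) by omega] at hx)
      y (by rwa [show s-1 = 2*s-3-(s-2) by omega] at hy)
  have hCne : C n (s-1) ≠ ⊥ := by
    intro hbot
    exact hne (le_bot_iff.1 (le_trans (C_le_of_le (by omega)) (le_of_eq hbot)))
  obtain ⟨u, hune, hu, hline⟩ := isotropic_line hL hsymm hiso hCne
  -- strictness : C s ≠ C (s-1)
  have hstrict : C n s ≠ C n (s-1) := by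
    intro heq
    have h1 : C n (s+1) = C n s := by
      have := C_stab (j := s-1) (by rwa [show (s-1)+1 = s by omega])
      rwa [show (s-1)+2 = s+1 by omega, show (s-1)+1 = s by omega] at this
    rw [htop] at h1
    exact hne h1.symm
  have hle : C n s ≤ C n (s-1) := C_le_of_le (by omega)
  obtain ⟨y, hy, hyne⟩ := Submodule.exists_mem_ne_zero_of_ne_bot hne
  obtain ⟨x, hx, hxnot⟩ : ∃ x, x ∈ C n (s-1) ∧ x ∉ C n s := by
    by_contra hcon
    push_neg at hcon
    exact hstrict (le_antisymm hle (fun z hz => hcon z hz))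
  obtain ⟨a, ha⟩ := Submodule.mem_span_singleton.1 (hline hx)
  obtain ⟨b, hb⟩ := Submodule.mem_span_singleton.1 (hline (hle hy))
  have hbne : b ≠ 0 := by
    rintro rfl
    rw [zero_smul] at hb
    exact hyne hb.symm
  have : u = b⁻¹ • y := by rw [← hb, smul_smul, inv_mul_cancel₀ hbne, one_smul]
  apply hxnot
  rw [← ha, this, smul_smul]
  exact Submodule.smul_mem _ _ hy

include hsk hL hsymm in
lemma C4_eq_bot [LieRing.IsNilpotent n] : C n 4 = ⊥ := by
  obtain ⟨N, hN⟩ := exists_C_eq_bot (n := n)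
  rcases le_or_gt N 4 with h | h
  · exact le_bot_iff.1 (le_trans (C_le_of_le h) (le_of_eq hN))
  · have key : ∀ d : ℕ, C n (4 + d) = ⊥ → C n 4 = ⊥ := by
      intro d
      induction d with
      | zero => exact fun h => h
      | succ d ih =>
        intro hbot
        refine ih ?_
        exact excl_ge4 (hsk := hsk) (hL := hL) (hsymm := hsymm) (by omega)
          (by rwa [show 4+(d+1) = (4+d)+1 by omega] at hbot)
    refine key (N - 4) ?_
    rwa [show 4 + (N - 4) = N by omega]

variable (hndC1 : ∀ x ∈ C n 1, (∀ y ∈ C n 1, B x y = 0) → x = 0)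

include hsk hndC1 in
lemma rank_one_kill {u : n} (hu : u ∈ C n 1) (U : n)
    (h : ∀ Z ∈ C n 1, ∃ t : ℝ, ⁅U, Z⁆ = t • u) :
    ∀ Z ∈ C n 1, ⁅U, Z⁆ = 0 := by
  intro Z hZ
  obtain ⟨t, ht⟩ := h Z hZ
  rcases eq_or_ne t 0 with rfl | htne
  · rw [ht, zero_smul]
  · have huZ : B u Z = 0 := by
      have h1 := hsk U Z Z hZ hZ
      rw [ht] at h1
      simp only [map_smul, LinearMap.smul_apply, smul_eq_mul] at h1
      have : t * B u Z = -(t * B u Z) := h1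
      have h2 : t * B u Z = 0 := by linarith
      rcases mul_eq_zero.1 h2 with h3 | h3
      · exact absurd h3 htne
      · exact h3
    have hB : ∀ W ∈ C n 1, B u W = 0 := by
      intro W hW
      obtain ⟨s, hs⟩ := h W hW
      have h1 := hsk U Z W hZ hW
      rw [ht, hs] at h1
      simp only [map_smul, LinearMap.smul_apply, smul_eq_mul] at h1
      rw [huZ] at h1
      have : t * B u W = 0 := by linarith
      rcases mul_eq_zero.1 this with h3 | h3
      · exact absurd h3 htne
      · exact h3
    have : u = 0 := hndC1 u hu hB
    rw [ht, this, smul_zero]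

include hsk hsymm hL hndC1 in
lemma C2_bot_of_C3_bot (h3 : C n 3 = ⊥) : C n 2 = ⊥ := by
  -- C 2 is totally isotropic
  have hiso : ∀ x ∈ C n 2, ∀ y ∈ C n 2, B x y = 0 := by
    intro x hx
    induction hx using Submodule.span_induction with
    | mem z hz =>
      obtain ⟨U, c, hc, rfl⟩ := hz
      intro y hy
      rw [hsk U c y hc (C_le_of_le (i := 2) (j := 1) (by omega) hy)]
      have : ⁅U, y⁆ ∈ C n 3 := lie_mem_C_succ U hy
      rw [h3] at this
      simp only [Submodule.mem_bot] at this
      rw [this]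
      simp
    | zero => intro y _; simp
    | add a b _ _ iha ihb => intro y hy; rw [map_add, LinearMap.add_apply, iha y hy, ihb y hy]; ring
    | smul t a _ iha => intro y hy; rw [map_smul, LinearMap.smul_apply, smul_eq_mul, iha y hy]; ring
  rcases eq_or_ne (C n 2) ⊥ with h | hne
  · exact h
  obtain ⟨u, hune, hu, hline⟩ := isotropic_line hL hsymm hiso hne
  have hkill : ∀ U : n, ∀ Z ∈ C n 1, ⁅U, Z⁆ = 0 := by
    intro U
    refine rank_one_kill (hsk := hsk) (hndC1 := hndC1) (C_le_of_le (i := 2) (j := 1) (by omega) hu) U ?_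
    intro Z hZ
    have : ⁅U, Z⁆ ∈ C n 2 := lie_mem_C_succ U hZ
    exact Submodule.mem_span_singleton.1 (hline this) |>.imp (fun a ha => ha.symm)
  rw [C_succ_eq 1, eq_bot_iff]
  refine Submodule.span_le.2 ?_
  rintro z ⟨U, c, hc, rfl⟩
  rw [hkill U c hc]
  simp

end C5

section C6

variable [FiniteDimensional ℝ n]
variable (hGO : IsGO B)
variable (hndC1 : ∀ x ∈ C n 1, (∀ y ∈ C n 1, B x y = 0) → x = 0)
variable (hsk : ∀ (U z w : n), z ∈ C n 1 → w ∈ C n 1 → B ⁅U, z⁆ w = -(B ⁅U, w⁆ z))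

lemma ad_iter_mem (U : n) : ∀ (k : ℕ) (z : n), (fun w => ⁅U, w⁆)^[k] z ∈ C n k := by
  intro k
  induction k with
  | zero => intro z; trivial
  | succ k ih =>
    intro z
    rw [Function.iterate_succ_apply']
    exact lie_mem_C_succ U (ih z)

lemma ad_iter_mem' (U : n) : ∀ (k : ℕ) (z : n), z ∈ C n 1 →
    (fun w => ⁅U, w⁆)^[k] z ∈ C n (k+1) := by
  intro k
  induction k with
  | zero => intro z hz; exact hz
  | succ k ih =>
    intro z hz
    rw [Function.iterate_succ_apply']
    exact lie_mem_C_succ U (ih z hz)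

include hsk hsymm in
lemma posdef_kill [LieRing.IsNilpotent n]
    (hposM : ∀ m ∈ C n 1, m ≠ 0 → 0 < B m m) : C n 2 = ⊥ := by
  obtain ⟨N, hN⟩ := exists_C_eq_bot (n := n)
  have main : ∀ U : n, ∀ k : ℕ, (∀ z ∈ C n 1, (fun w => ⁅U, w⁆)^[k+1] z = 0) →
      ∀ z ∈ C n 1, ⁅U, z⁆ = 0 := by
    intro U k
    induction k with
    | zero =>
      intro h z hz
      simpa using h z hz
    | succ k ih =>
      intro h z hz
      refine ih (fun z' hz' => ?_) z hz
      set f := fun w : n => ⁅U, w⁆ with hf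
      have hx1 : f^[k+1] z' ∈ C n 1 :=
        C_le_of_le (i := k+2) (j := 1) (by omega) (ad_iter_mem' U (k+1) z' hz')
      have ha1 : f^[k] z' ∈ C n 1 :=
        C_le_of_le (i := k+1) (j := 1) (by omega) (ad_iter_mem' U k z' hz')
      have hq : B (f^[k+1] z') (f^[k+1] z') = 0 := by
        have e : f^[k+1] z' = ⁅U, f^[k] z'⁆ := Function.iterate_succ_apply' f k z'
        calc B (f^[k+1] z') (f^[k+1] z')
            = B ⁅U, f^[k] z'⁆ (f^[k+1] z') := by rw [← e]
        _ = -(B ⁅U, f^[k+1] z'⁆ (f^[k] z')) := hsk U _ _ ha1 hx1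
        _ = 0 := by
            have e2 : ⁅U, f^[k+1] z'⁆ = f^[k+1+1] z' :=
              (Function.iterate_succ_apply' f (k+1) z').symm
            rw [e2, h z' hz', map_zero]
            simp
      by_contra hne
      have := hposM _ hx1 hne
      rw [hq] at this
      exact lt_irrefl 0 this
  have hkill : ∀ U : n, ∀ z ∈ C n 1, ⁅U, z⁆ = 0 := by
    intro U
    refine main U N (fun z hz => ?_)
    have h1 : (fun w => ⁅U, w⁆)^[N] z ∈ C n N := ad_iter_mem U N z
    rw [hN] at h1
    simp only [Submodule.mem_bot] at h1
    rw [Function.iterate_succ_apply', h1, lie_zero]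
  rw [C_succ_eq 1, eq_bot_iff]
  refine Submodule.span_le.2 ?_
  rintro z ⟨U, c, hc, rfl⟩
  rw [hkill U c hc]
  simp

include hGO hsymm hndC1 hsk in
lemma PKG {X Z : n} (hX : X ∈ B.orthogonal (C n 1)) (hXpos : 0 < B X X)
    (hZ : Z ∈ C n 1) :
    ∃ A : n →ₗ[ℝ] n, IsSkewDeriv B A ∧ A Z = -⁅X, Z⁆ ∧
      ∀ X' ∈ B.orthogonal (C n 1), B (A X) X' = B ⁅X, X'⁆ Z := by
  obtain ⟨A, k, hA, hid⟩ := hGO (X + Z)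
  have hAX : A X ∈ B.orthogonal (C n 1) := skewDeriv_orth_mem hA hX
  have hk0 : k = 0 := by
    have h := hid X
    have e1 : ⁅X + Z, X⁆ = ⁅Z, X⁆ := by rw [add_lie, lie_self, zero_add]
    rw [e1] at h
    simp only [map_add, LinearMap.add_apply] at h
    have hZX1 : ⁅Z, X⁆ ∈ C n 1 := bracket_mem_C1 Z X
    rw [orth_pair hX hZX1] at h
    have e2 : B ⁅Z, X⁆ Z = 0 := by
      rw [← lie_skew, map_neg, LinearMap.neg_apply, L1 hsymm hGO X hX Z hZ, neg_zero]
    rw [e2, skew_self (hA := hA) (hsymm := hsymm) X, orth_pair' hsymm hAX hZ,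
      orth_pair hX hZ] at h
    have : 0 = k * B X X := by linarith
    rcases mul_eq_zero.1 this.symm with h' | h'
    · exact h'
    · exact absurd h' (ne_of_gt hXpos)
  have hAZ : A Z = -⁅X, Z⁆ := by
    have hWall : ∀ W ∈ C n 1, B (⁅X, Z⁆ + A Z) W = 0 := by
      intro W hW
      have h := hid W
      rw [hk0, zero_mul] at h
      have e1 : ⁅X + Z, W⁆ = ⁅X, W⁆ + ⁅Z, W⁆ := add_lie X Z W
      rw [e1] at h
      simp only [map_add, LinearMap.add_apply] at h
      have hAW1 : A W ∈ C n 1 := skewDeriv_C_mem hA 1 W hW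
      rw [orth_pair hX (bracket_mem_C1 X W), orth_pair hX (bracket_mem_C1 Z W),
        orth_pair hX hAW1] at h
      have e2 : B ⁅Z, W⁆ Z = 0 := by
        rw [hsk Z W Z hW hZ, lie_self, map_zero]
        simp
      rw [e2] at h
      -- h : B ⁅X,W⁆ Z + B (A W) Z = 0 (up to zero summands)
      have e3 : B ⁅X, W⁆ Z = -(B ⁅X, Z⁆ W) := hsk X W Z hW hZ
      have e4 : B (A W) Z = -(B (A Z) W) := by
        have h5 := hA.2 Z W
        have h6 : B (A W) Z = B Z (A W) := hsymm _ _
        linarith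
      rw [map_add, LinearMap.add_apply]
      linarith
    have hmem : ⁅X, Z⁆ + A Z ∈ C n 1 :=
      (C n 1).add_mem (bracket_mem_C1 X Z) (skewDeriv_C_mem hA 1 Z hZ)
    have := hndC1 _ hmem hWall
    exact eq_neg_of_add_eq_zero_right this
  refine ⟨A, hA, hAZ, ?_⟩
  intro X' hX'
  have h := hid X'
  rw [hk0, zero_mul] at h
  have e1 : ⁅X + Z, X'⁆ = ⁅X, X'⁆ + ⁅Z, X'⁆ := add_lie X Z X'
  rw [e1] at h
  simp only [map_add, LinearMap.add_apply] at h
  have hAX' : A X' ∈ B.orthogonal (C n 1) := skewDeriv_orth_mem hA hX'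
  rw [orth_pair hX (bracket_mem_C1 X X'), orth_pair hX (bracket_mem_C1 Z X'),
    orth_pair' hsymm hAX' hZ] at h
  have e2 : B ⁅Z, X'⁆ Z = 0 := by
    rw [← lie_skew, map_neg, LinearMap.neg_apply, L1 hsymm hGO X' hX' Z hZ, neg_zero]
  rw [e2] at h
  -- h : B ⁅X,X'⁆ Z + B (A X') X = 0
  have e3 : B (A X') X = -(B (A X) X') := by
    have h5 := hA.2 X X'
    have h6 : B (A X') X = B X (A X') := hsymm _ _
    linarith
  linarith

end C6

section C7

variable [FiniteDimensional ℝ n]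
variable (hGO : IsGO B)
variable (hndC1 : ∀ x ∈ C n 1, (∀ y ∈ C n 1, B x y = 0) → x = 0)
variable (hsk : ∀ (U z w : n), z ∈ C n 1 → w ∈ C n 1 → B ⁅U, z⁆ w = -(B ⁅U, w⁆ z))
variable (hnd : ∀ X : n, (∀ Y : n, B X Y = 0) → X = 0)
variable (hposV : ∀ v ∈ B.orthogonal (C n 1), v ≠ 0 → 0 < B v v)

/-- The right-bracket linear map `Y ↦ ⁅Y, Z₀⁆`. -/
def adR (Z₀ : n) : n →ₗ[ℝ] n where
  toFun := fun Y => ⁅Y, Z₀⁆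
  map_add' := fun a b => add_lie a b Z₀
  map_smul' := fun t a => smul_lie t a Z₀

@[simp] lemma adR_apply (Z₀ Y : n) : adR Z₀ Y = ⁅Y, Z₀⁆ := rfl

/-- Given two linear conditions on `ℝ³`, there is a nontrivial solution. -/
lemma exists_perp_scalar (p q r x y z : ℝ) :
    ∃ a b c : ℝ, ¬(a = 0 ∧ b = 0 ∧ c = 0) ∧
      a * p + b * q + c * r = 0 ∧ a * x + b * y + c * z = 0 := by
  by_cases hc : q * z - r * y = 0 ∧ r * x - p * z = 0 ∧ p * y - q * x = 0
  · obtain ⟨hc1, hc2, hc3⟩ := hc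
    by_cases hp12 : p = 0 ∧ q = 0
    · obtain ⟨hp0, hq0⟩ := hp12
      by_cases hr0 : r = 0
      · -- p = q = r = 0 : only the second condition matters
        by_cases hx12 : x = 0 ∧ y = 0
        · by_cases hz0 : z = 0
          · exact ⟨1, 0, 0, by simp, by simp [hp0], by simp [hx12.1]⟩
          · exact ⟨1, 0, 0, by simp, by simp [hp0], by simp [hx12.1]⟩
        · refine ⟨y, -x, 0, ?_, ?_, ?_⟩
          · intro ⟨h1, h2, _⟩
            exact hx12 ⟨by linarith [neg_eq_zero.1 h2], h1⟩
          · rw [hp0, hq0, hr0]; ring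
          · ring
      · -- r ≠ 0
        refine ⟨0, r, -q, ?_, ?_, ?_⟩
        · intro ⟨_, h2, _⟩; exact hr0 h2
        · ring
        · -- r * y - q * z = 0 from hc1
          nlinarith [hc1]
    · refine ⟨q, -p, 0, ?_, ?_, ?_⟩
      · intro ⟨h1, h2, _⟩
        exact hp12 ⟨by linarith [neg_eq_zero.1 h2], h1⟩
      · ring
      · nlinarith [hc3]
  · refine ⟨q * z - r * y, r * x - p * z, p * y - q * x, hc, by ring, by ring⟩

include hL hsymm hGO hndC1 hsk hnd hposV in
set_option maxHeartbeats 3000000 in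
lemma caseB [LieRing.IsNilpotent n] (h3 : C n 3 ≠ ⊥) (h4 : C n 4 = ⊥) : False := by
  classical
  -- C 3 is totally isotropic
  have hiso3 : ∀ x ∈ C n 3, ∀ y ∈ C n 3, B x y = 0 := by
    intro x hx
    induction hx using Submodule.span_induction with
    | mem z hz =>
      obtain ⟨U, c, hc, rfl⟩ := hz
      intro y hy
      rw [hsk U c y (C_le_of_le (i := 2) (j := 1) (by omega) hc)
        (C_le_of_le (i := 3) (j := 1) (by omega) hy)]
      have h1 : ⁅U, y⁆ ∈ C n 4 := lie_mem_C_succ U hy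
      rw [h4] at h1
      simp only [Submodule.mem_bot] at h1
      rw [h1, map_zero]
      simp
    | zero => intro y _; simp
    | add a b _ _ iha ihb => intro y hy; rw [map_add, LinearMap.add_apply, iha y hy, ihb y hy]; ring
    | smul t a _ iha => intro y hy; rw [map_smul, LinearMap.smul_apply, smul_eq_mul, iha y hy]; ring
  obtain ⟨u, hune, huC3, hline⟩ := isotropic_line hL hsymm hiso3 h3
  have huC1 : u ∈ C n 1 := C_le_of_le (i := 3) (j := 1) (by omega) huC3
  have huC2 : u ∈ C n 2 := C_le_of_le (i := 3) (j := 2) (by omega) huC3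
  -- u is central
  have hcen : ∀ W : n, ⁅W, u⁆ = 0 := by
    intro W
    have : ⁅W, u⁆ ∈ C n 4 := lie_mem_C_succ W huC3
    rw [h4] at this
    simpa using this
  -- C 2 pairs trivially with u
  have hC2u : ∀ y ∈ C n 2, B y u = 0 := by
    intro y hy
    induction hy using Submodule.span_induction with
    | mem z hz =>
      obtain ⟨U, c, hc, rfl⟩ := hz
      rw [hsk U c u hc huC1, hcen U, map_zero]
      simp
    | zero => simp
    | add a b _ _ iha ihb => rw [map_add, LinearMap.add_apply, iha, ihb]; ring
    | smul t a _ iha => rw [map_smul, LinearMap.smul_apply, smul_eq_mul, iha]; ring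
  have huu : B u u = 0 := hC2u u huC2
  -- the dual vector Z₀
  obtain ⟨Z₀, hZ₀C1, huZ₀⟩ : ∃ Z₀ ∈ C n 1, B u Z₀ = 1 := by
    by_cases hno : ∀ Z ∈ C n 1, B u Z = 0
    · exact absurd (hndC1 u huC1 hno) hune
    · push_neg at hno
      obtain ⟨Z', hZ', hne⟩ := hno
      refine ⟨(B u Z')⁻¹ • Z', (C n 1).smul_mem _ hZ', ?_⟩
      rw [map_smul, smul_eq_mul, inv_mul_cancel₀ hne]
  -- M is abelian
  have hMM : ∀ Z ∈ C n 1, ∀ W ∈ C n 1, ⁅Z, W⁆ = 0 := by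
    intro Z hZ
    refine rank_one_kill (hsk := hsk) (hndC1 := hndC1) huC1 Z ?_
    intro W hW
    obtain ⟨a, ha⟩ := Submodule.mem_span_singleton.1 (hline (lie_C1_C1_mem hZ hW))
    exact ⟨a, ha.symm⟩
  -- the S-formula : ⁅X, Z⁆ = B u Z • ⁅X,Z₀⁆ - B ⁅X,Z₀⁆ Z • u for X ∈ V, Z ∈ C 1
  have hSform : ∀ X ∈ B.orthogonal (C n 1), ∀ Z ∈ C n 1,
      ⁅X, Z⁆ = B u Z • ⁅X, Z₀⁆ - B ⁅X, Z₀⁆ Z • u := by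
    have parta : ∀ X ∈ B.orthogonal (C n 1), ∀ Z' ∈ C n 1, B u Z' = 0 →
        ⁅X, Z'⁆ = -(B ⁅X, Z₀⁆ Z') • u := by
      intro X hX Z' hZ' huZ'
      have hperp : ∀ y ∈ C n 2, B ⁅X, Z'⁆ y = 0 := by
        intro y hy
        rw [hsk X Z' y hZ' (C_le_of_le (i := 2) (j := 1) (by omega) hy)]
        obtain ⟨t, ht⟩ := Submodule.mem_span_singleton.1 (hline (lie_mem_C_succ X hy))
        rw [← ht, map_smul, LinearMap.smul_apply, smul_eq_mul, huZ']
        ring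
      have hXZ'C2 : ⁅X, Z'⁆ ∈ C n 2 := lie_mem_C_succ X hZ'
      have h1 : B u ⁅X, Z'⁆ = 0 := by rw [hsymm]; exact hC2u _ hXZ'C2
      have hself : B ⁅X, Z'⁆ ⁅X, Z'⁆ = 0 := hperp _ hXZ'C2
      obtain ⟨c, hc⟩ := (lorentz_null_orthogonal hL hsymm huu hune h1).2 hself
      have e1 : B ⁅X, Z'⁆ Z₀ = c := by
        rw [hc, map_smul, LinearMap.smul_apply, smul_eq_mul, huZ₀, mul_one]
      have e2 : B ⁅X, Z'⁆ Z₀ = -(B ⁅X, Z₀⁆ Z') := hsk X Z' Z₀ hZ' hZ₀C1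
      rw [hc, show c = -(B ⁅X, Z₀⁆ Z') by linarith]
    intro X hX Z hZ
    have hZ'C1 : Z - B u Z • Z₀ ∈ C n 1 :=
      (C n 1).sub_mem hZ ((C n 1).smul_mem _ hZ₀C1)
    have huZ' : B u (Z - B u Z • Z₀) = 0 := by
      rw [map_sub, map_smul, smul_eq_mul, huZ₀]
      ring
    have hsplit : ⁅X, Z⁆ = ⁅X, Z - B u Z • Z₀⁆ + B u Z • ⁅X, Z₀⁆ := by
      rw [lie_sub, lie_smul]
      abel
    have hcoef : B ⁅X, Z₀⁆ (Z - B u Z • Z₀) = B ⁅X, Z₀⁆ Z := by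
      rw [map_sub, map_smul, smul_eq_mul, L1 hsymm hGO X hX Z₀ hZ₀C1]
      ring
    rw [hsplit, parta X hX _ hZ'C1 huZ', hcoef]
    module
  -- facts about images q X = ⁅X, Z₀⁆
  have hqC2 : ∀ X : n, ⁅X, Z₀⁆ ∈ C n 2 := fun X => lie_mem_C_succ X hZ₀C1
  have hqZ₀ : ∀ X ∈ B.orthogonal (C n 1), B ⁅X, Z₀⁆ Z₀ = 0 := fun X hX => L1 hsymm hGO X hX Z₀ hZ₀C1
  have hqu : ∀ X : n, B ⁅X, Z₀⁆ u = 0 := fun X => hC2u _ (hqC2 X)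
  -- positivity on q-images
  have hqpos : ∀ X : n, ⁅X, Z₀⁆ ≠ 0 → B ⁅X, Z₀⁆ Z₀ = 0 → 0 < B ⁅X, Z₀⁆ ⁅X, Z₀⁆ := by
    intro X hne hZ₀0
    have h1 : B u ⁅X, Z₀⁆ = 0 := by rw [hsymm]; exact hqu X
    have h2 := (lorentz_null_orthogonal hL hsymm huu hune h1).1
    rcases lt_or_eq_of_le h2 with h | h
    · exact h
    · exfalso
      obtain ⟨c, hc⟩ := (lorentz_null_orthogonal hL hsymm huu hune h1).2 h.symm
      have : B ⁅X, Z₀⁆ Z₀ = c := by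
        rw [hc, map_smul, LinearMap.smul_apply, smul_eq_mul, huZ₀, mul_one]
      rw [hZ₀0] at this
      rw [hc, ← this, zero_smul] at hne
      exact hne rfl
  -- Jacobi identity paired with q-images
  have hJQ : ∀ Y ∈ B.orthogonal (C n 1), ∀ Y' ∈ B.orthogonal (C n 1),
      ∀ Y'' ∈ B.orthogonal (C n 1), ∀ e : n, B e u = 0 →
      B u ⁅Y', Y''⁆ * B ⁅Y, Z₀⁆ e + B u ⁅Y'', Y⁆ * B ⁅Y', Z₀⁆ e
        + B u ⁅Y, Y'⁆ * B ⁅Y'', Z₀⁆ e = 0 := by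
    intro Y hY Y' hY' Y'' hY'' e heu
    have hue : B u e = 0 := by rw [hsymm]; exact heu
    have hjac := lie_jacobi Y Y' Y''
    have happ : B (⁅Y, ⁅Y', Y''⁆⁆ + ⁅Y', ⁅Y'', Y⁆⁆ + ⁅Y'', ⁅Y, Y'⁆⁆) e = 0 := by
      rw [hjac, map_zero]
      simp
    have hterm : ∀ Ya ∈ B.orthogonal (C n 1), ∀ w ∈ C n 1,
        B ⁅Ya, w⁆ e = B u w * B ⁅Ya, Z₀⁆ e := by
      intro Ya hYa w hw
      rw [hSform Ya hYa w hw, map_sub, map_smul, map_smul, LinearMap.sub_apply,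
        LinearMap.smul_apply, LinearMap.smul_apply, smul_eq_mul, smul_eq_mul, hue]
      ring
    rw [map_add, map_add, LinearMap.add_apply, LinearMap.add_apply,
      hterm Y hY _ (bracket_mem_C1 Y' Y''), hterm Y' hY' _ (bracket_mem_C1 Y'' Y),
      hterm Y'' hY'' _ (bracket_mem_C1 Y Y')] at happ
    linarith
  -- b is not identically zero
  obtain ⟨Yb, hYb, Yb', hYb', hbne⟩ : ∃ Yb ∈ B.orthogonal (C n 1), ∃ Yb' ∈ B.orthogonal (C n 1),
      B u ⁅Yb, Yb'⁆ ≠ 0 := by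
    by_contra hno
    push_neg at hno
    have hzero : ∀ y ∈ C n 1, B y u = 0 := by
      intro y hy
      induction hy using Submodule.span_induction with
      | mem z hz =>
        obtain ⟨U, c, _, rfl⟩ := hz
        obtain ⟨X, hX, Z, hZ, rfl⟩ := exists_decomp hsymm hndC1 U
        obtain ⟨X', hX', Z', hZ', rfl⟩ := exists_decomp hsymm hndC1 c
        have e1 : ⁅X + Z, X' + Z'⁆ = ⁅X, X'⁆ + (⁅X, Z'⁆ + (- ⁅X', Z⁆ + ⁅Z, Z'⁆)) := by
          rw [add_lie, lie_add, lie_add, ← lie_skew X' Z]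
          abel
        rw [e1]
        simp only [map_add, map_neg, LinearMap.add_apply, LinearMap.neg_apply]
        have e0 : B ⁅X, X'⁆ u = 0 := by
          have := hno X hX X' hX'
          rw [hsymm] at this
          exact this
        rw [e0, hMM Z hZ Z' hZ', hC2u _ (lie_mem_C_succ X hZ'), hC2u _ (lie_mem_C_succ X' hZ)]
        simp
      | zero => simp
      | add a b _ _ iha ihb => rw [map_add, LinearMap.add_apply, iha, ihb]; ring
      | smul t a _ iha => rw [map_smul, LinearMap.smul_apply, smul_eq_mul, iha]; ring
    refine hune (hndC1 u huC1 ?_)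
    intro y hy
    rw [hsymm]
    exact hzero y hy
  -- abbreviation
  set V := B.orthogonal (C n 1) with hV
  -- value of brackets with Z₀ + W
  have hbrZ : ∀ Y ∈ V, ∀ W ∈ C n 1, B u W = 0 →
      ⁅Y, Z₀ + W⁆ = ⁅Y, Z₀⁆ - B ⁅Y, Z₀⁆ W • u := by
    intro Y hY W hW huW
    rw [hSform Y hY (Z₀ + W) ((C n 1).add_mem hZ₀C1 hW)]
    rw [map_add, huZ₀, huW, map_add, hqZ₀ Y hY]
    module
  -- derivation transport of q along a PKG derivation
  have hAq : ∀ (A : n →ₗ[ℝ] n), IsSkewDeriv B A →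
      (∃ X W, X ∈ V ∧ W ∈ C n 1 ∧ B u W = 0 ∧ A (Z₀ + W) = -⁅X, Z₀ + W⁆) →
      ∀ Y ∈ V, ∃ s : ℝ, A ⁅Y, Z₀⁆ = ⁅A Y, Z₀⁆ + s • u := by
    intro A hA ⟨X, W, hX, hW, huW, hAZ⟩ Y hY
    have hAY : A Y ∈ V := skewDeriv_orth_mem hA hY
    obtain ⟨lam, hlam⟩ := Submodule.mem_span_singleton.1 (hline (skewDeriv_C_mem hA 3 u huC3))
    obtain ⟨t, ht⟩ := Submodule.mem_span_singleton.1 (hline (lie_mem_C_succ Y (hqC2 X)))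
    have e := hA.1 Y (Z₀ + W)
    rw [hbrZ Y hY W hW huW, hbrZ (A Y) hAY W hW huW] at e
    have eAZ : ⁅Y, A (Z₀ + W)⁆ = -⁅Y, ⁅X, Z₀⁆⁆ := by
      rw [hAZ, hbrZ X hX W hW huW]
      rw [lie_neg, lie_sub, lie_smul, hcen Y, smul_zero, sub_zero]
    rw [eAZ, ← ht, map_sub, map_smul, ← hlam] at e
    refine ⟨B ⁅Y, Z₀⁆ W * lam - B ⁅A Y, Z₀⁆ W - t, ?_⟩
    have e2 : A ⁅Y, Z₀⁆ - B ⁅Y, Z₀⁆ W • lam • u =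
        ⁅A Y, Z₀⁆ - B ⁅A Y, Z₀⁆ W • u + -(t • u) := e
    linear_combination (norm := module) e2
  -- the kernel and its orthogonal complement inside V
  set K : Submodule ℝ n := V ⊓ LinearMap.ker (adR Z₀) with hK
  set P : Submodule ℝ n := V ⊓ B.orthogonal K with hP
  have hKmem : ∀ x, x ∈ K ↔ x ∈ V ∧ ⁅x, Z₀⁆ = 0 := by
    intro x
    rw [hK, Submodule.mem_inf, LinearMap.mem_ker, adR_apply]
  have hPmem : ∀ x, x ∈ P ↔ x ∈ V ∧ ∀ y ∈ K, B y x = 0 := by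
    intro x
    rw [hP, Submodule.mem_inf, LinearMap.BilinForm.mem_orthogonal_iff]
    rfl
  have hKP0 : ∀ x ∈ P, x ∈ K → x = 0 := by
    intro x hxP hxK
    by_contra hne
    have h1 := hposV x ((hPmem x).1 hxP).1 hne
    have h2 := ((hPmem x).1 hxP).2 x hxK
    rw [h2] at h1
    exact lt_irrefl 0 h1
  have hVdecomp : ∀ Y ∈ V, ∃ κ, κ ∈ K ∧ ∃ p, p ∈ P ∧ Y = κ + p := by
    intro Y hY
    have hKnd : (B.restrict K).Nondegenerate := by
      suffices hKl : (B.restrict K).SeparatingLeft from ⟨hKl, fun x hx => hKl x (fun y => by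
        have := hx y
        simp only [LinearMap.BilinForm.restrict_apply, LinearMap.domRestrict_apply] at this ⊢
        rw [hsymm]; exact this)⟩
      intro x hx
      by_cases hxe : (x : n) = 0
      · exact Subtype.ext hxe
      · exfalso
        have h1 := hposV x ((hKmem x).1 x.2).1 hxe
        have h2 := hx x
        simp only [LinearMap.BilinForm.restrict_apply, LinearMap.domRestrict_apply] at h2
        rw [h2] at h1
        exact lt_irrefl 0 h1
    have hcompl := LinearMap.BilinForm.isCompl_orthogonal_of_restrict_nondegenerate
      (B := B) (W := K) (hrefl hsymm) hKnd
    have : Y ∈ K ⊔ B.orthogonal K := by rw [hcompl.sup_eq_top]; trivial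
    obtain ⟨κ, hκ, o, ho, hYo⟩ := Submodule.mem_sup.1 this
    refine ⟨κ, hκ, Y - κ, ?_, by abel⟩
    rw [hPmem]
    constructor
    · exact Submodule.sub_mem _ hY ((hKmem κ).1 hκ).1
    · intro y hy
      have : Y - κ = o := by rw [← hYo]; abel
      rw [this]
      exact (LinearMap.BilinForm.mem_orthogonal_iff.1 ho) y hy
  -- q vanishes on K-components
  have hqK : ∀ κ ∈ K, ⁅κ, Z₀⁆ = 0 := fun κ hκ => ((hKmem κ).1 hκ).2
  -- trichotomy on the rank of q
  by_cases hr0 : ∀ Y ∈ V, ⁅Y, Z₀⁆ = 0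
  · -- rank 0 : C 2 = ⊥, contradicting C 3 ≠ ⊥
    apply h3
    have hC2 : C n 2 = ⊥ := by
      rw [C_succ_eq 1, eq_bot_iff]
      refine Submodule.span_le.2 ?_
      rintro z ⟨U, c, hc, rfl⟩
      obtain ⟨X, hX, Z, hZ, rfl⟩ := exists_decomp hsymm hndC1 U
      have e1 : ⁅X + Z, c⁆ = ⁅X, c⁆ + ⁅Z, c⁆ := add_lie X Z c
      rw [e1, hMM Z hZ c hc, hSform X hX c hc, hr0 X hX]
      simp
    exact le_bot_iff.1 (le_trans (C_le_of_le (i := 3) (j := 2) (by omega)) (le_of_eq hC2))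
  push_neg at hr0
  obtain ⟨g₁, hg₁V, hg₁⟩ := hr0
  -- builder: from an element with nonzero q-image, produce a unit-image element of P
  have hbuild : ∀ g ∈ V, ⁅g, Z₀⁆ ≠ 0 → ∃ F, F ∈ P ∧ B ⁅F, Z₀⁆ ⁅F, Z₀⁆ = 1 ∧
      ∃ r : ℝ, r ≠ 0 ∧ ⁅F, Z₀⁆ = r • ⁅g, Z₀⁆ := by
    intro g hgV hgne
    obtain ⟨κ, hκ, p, hp, hgdec⟩ := hVdecomp g hgV
    have hqp : ⁅p, Z₀⁆ = ⁅g, Z₀⁆ := by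
      rw [hgdec, add_lie, hqK κ hκ, zero_add]
    have hpos : 0 < B ⁅g, Z₀⁆ ⁅g, Z₀⁆ := hqpos g hgne (hqZ₀ g hgV)
    set s := Real.sqrt (B ⁅g, Z₀⁆ ⁅g, Z₀⁆) with hs
    have hspos : 0 < s := Real.sqrt_pos.2 hpos
    have hss : s * s = B ⁅g, Z₀⁆ ⁅g, Z₀⁆ := Real.mul_self_sqrt (le_of_lt hpos)
    refine ⟨s⁻¹ • p, Submodule.smul_mem _ _ hp, ?_, s⁻¹, inv_ne_zero (ne_of_gt hspos), ?_⟩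
    · have hsne : s ≠ 0 := ne_of_gt hspos
      rw [smul_lie, hqp]
      simp only [map_smul, LinearMap.smul_apply, smul_eq_mul]
      field_simp
      linarith [hss]
    · rw [smul_lie, hqp]
  obtain ⟨F₁, hF₁P, hF₁unit, r₁, hr₁ne, hF₁eq⟩ := hbuild g₁ hg₁V hg₁
  have hF₁V : F₁ ∈ V := ((hPmem F₁).1 hF₁P).1
  have he₁C1 : ⁅F₁, Z₀⁆ ∈ C n 1 := C_le_of_le (i := 2) (j := 1) (by omega) (hqC2 F₁)
  have he₁u : B ⁅F₁, Z₀⁆ u = 0 := hqu F₁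
  have hF₁ne : F₁ ≠ 0 := by
    intro hzero
    rw [hzero, zero_lie] at hF₁unit
    simp at hF₁unit
  have hF₁pos : 0 < B F₁ F₁ := hposV F₁ hF₁V hF₁ne
  -- a PKG derivation maps P into P
  have hAP : ∀ (A : n →ₗ[ℝ] n), IsSkewDeriv B A →
      (∃ X W, X ∈ V ∧ W ∈ C n 1 ∧ B u W = 0 ∧ A (Z₀ + W) = -⁅X, Z₀ + W⁆) →
      ∀ p ∈ P, A p ∈ P := by
    intro A hA hdata p hp
    have hAκK : ∀ κ ∈ K, A κ ∈ K := by
      intro κ hκ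
      have hκV := ((hKmem κ).1 hκ).1
      have hAκV : A κ ∈ V := skewDeriv_orth_mem hA hκV
      obtain ⟨s, hsq⟩ := hAq A hA hdata κ hκV
      rw [hqK κ hκ, map_zero] at hsq
      have h1 : ⁅A κ, Z₀⁆ = (-s) • u := by
        linear_combination (norm := module) - hsq
      have h2 := hqZ₀ (A κ) hAκV
      rw [h1, map_smul, LinearMap.smul_apply, smul_eq_mul, huZ₀, mul_one] at h2
      rw [hKmem]
      exact ⟨hAκV, by rw [h1, h2, zero_smul]⟩
    rw [hPmem]
    refine ⟨skewDeriv_orth_mem hA ((hPmem p).1 hp).1, ?_⟩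
    intro y hy
    have h1 := hA.2 y p
    have h2 := ((hPmem p).1 hp).2 (A y) (hAκK y hy)
    linarith
  -- case analysis on the rank of q
  by_cases hr1 : ∀ Y ∈ V, ∃ t : ℝ, ⁅Y, Z₀⁆ = t • ⁅F₁, Z₀⁆
  · -- rank 1
    have hPspan : ∀ p ∈ P, ∃ cc : ℝ, p = cc • F₁ := by
      intro p hp
      obtain ⟨t, ht⟩ := hr1 p ((hPmem p).1 hp).1
      have hdiffK : p - t • F₁ ∈ K := by
        rw [hKmem]
        refine ⟨Submodule.sub_mem _ ((hPmem p).1 hp).1 (Submodule.smul_mem _ _ hF₁V), ?_⟩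
        rw [sub_lie, smul_lie, ht, sub_self]
      have hdiffP : p - t • F₁ ∈ P := Submodule.sub_mem _ hp (Submodule.smul_mem _ _ hF₁P)
      have := hKP0 _ hdiffP hdiffK
      exact ⟨t, by linear_combination (norm := module) this⟩
    have hkey : ∀ X' ∈ V, ⁅F₁, X'⁆ = 0 := by
      intro X' hX'
      have hWpin : ∀ W ∈ C n 1, B u W = 0 → B ⁅F₁, X'⁆ (Z₀ + W) = 0 := by
        intro W hW huW
        obtain ⟨A, hA, hAZ, hApin⟩ := PKG (hsymm := hsymm) (hGO := hGO) (hndC1 := hndC1) (hsk := hsk)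
          hF₁V hF₁pos ((C n 1).add_mem hZ₀C1 hW)
        have hdata : ∃ X W', X ∈ V ∧ W' ∈ C n 1 ∧ B u W' = 0 ∧ A (Z₀ + W') = -⁅X, Z₀ + W'⁆ :=
          ⟨F₁, W, hF₁V, hW, huW, hAZ⟩
        obtain ⟨cc, hcc⟩ := hPspan _ (hAP A hA hdata F₁ hF₁P)
        have hcc0 : cc = 0 := by
          have h1 : B (A F₁) F₁ = 0 := skew_self (hA := hA) (hsymm := hsymm) F₁
          rw [hcc, map_smul, LinearMap.smul_apply, smul_eq_mul] at h1
          rcases mul_eq_zero.1 h1 with h | h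
          · exact h
          · exact absurd h (ne_of_gt hF₁pos)
        have hAF₁0 : A F₁ = 0 := by rw [hcc, hcc0, zero_smul]
        have := hApin X' hX'
        rw [hAF₁0, map_zero, LinearMap.zero_apply] at this
        exact this.symm
      have hβC1 : ⁅F₁, X'⁆ ∈ C n 1 := bracket_mem_C1 F₁ X'
      have hβZ₀ : B ⁅F₁, X'⁆ Z₀ = 0 := by
        have := hWpin 0 (Submodule.zero_mem _) (by rw [map_zero])
        rw [add_zero] at this
        exact this
      refine hnd ⁅F₁, X'⁆ ?_
      intro y
      obtain ⟨Xv, hXv, Zv, hZv, rfl⟩ := exists_decomp hsymm hndC1 y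
      have hWvC1 : Zv - B u Zv • Z₀ ∈ C n 1 :=
        (C n 1).sub_mem hZv ((C n 1).smul_mem _ hZ₀C1)
      have huWv : B u (Zv - B u Zv • Z₀) = 0 := by
        rw [map_sub, map_smul, smul_eq_mul, huZ₀]; ring
      have h2 := hWpin _ hWvC1 huWv
      rw [map_add, hβZ₀, map_sub, map_smul, smul_eq_mul, hβZ₀] at h2
      have hZvpart : B ⁅F₁, X'⁆ Zv = 0 := by linarith
      rw [map_add, orth_pair hXv hβC1, hZvpart]
      ring
    -- b vanishes identically
    have hbK : ∀ κ ∈ K, ∀ Y' ∈ V, B u ⁅κ, Y'⁆ = 0 := by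
      intro κ hκ Y' hY'
      have hj := hJQ κ ((hKmem κ).1 hκ).1 Y' hY' F₁ hF₁V ⁅F₁, Z₀⁆ he₁u
      rw [hqK κ hκ, map_zero, LinearMap.zero_apply, hkey κ ((hKmem κ).1 hκ).1,
        map_zero, hF₁unit] at hj
      linarith
    obtain ⟨κ, hκ, p, hp, hYbdec⟩ := hVdecomp Yb hYb
    obtain ⟨cc, hcc⟩ := hPspan p hp
    apply hbne
    rw [hYbdec, hcc, add_lie, smul_lie, map_add, map_smul, smul_eq_mul,
      hbK κ hκ Yb' hYb', hkey Yb' hYb', map_zero]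
    ring
  -- rank at least 2 : build a second orthonormal image
  push_neg at hr1
  obtain ⟨g₂, hg₂V, hg₂⟩ := hr1
  have hg₂'V : g₂ - B ⁅F₁, Z₀⁆ ⁅g₂, Z₀⁆ • F₁ ∈ V :=
    Submodule.sub_mem _ hg₂V (Submodule.smul_mem _ _ hF₁V)
  have hqg₂' : ⁅g₂ - B ⁅F₁, Z₀⁆ ⁅g₂, Z₀⁆ • F₁, Z₀⁆
      = ⁅g₂, Z₀⁆ - B ⁅F₁, Z₀⁆ ⁅g₂, Z₀⁆ • ⁅F₁, Z₀⁆ := by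
    rw [sub_lie, smul_lie]
  have hg₂'ne : ⁅g₂ - B ⁅F₁, Z₀⁆ ⁅g₂, Z₀⁆ • F₁, Z₀⁆ ≠ 0 := by
    rw [hqg₂']
    intro h
    exact hg₂ (B ⁅F₁, Z₀⁆ ⁅g₂, Z₀⁆) (by linear_combination (norm := module) h)
  have he₁g₂' : B ⁅F₁, Z₀⁆ ⁅g₂ - B ⁅F₁, Z₀⁆ ⁅g₂, Z₀⁆ • F₁, Z₀⁆ = 0 := by
    rw [hqg₂', map_sub, map_smul, smul_eq_mul, hF₁unit]
    ring
  obtain ⟨F₂, hF₂P, hF₂unit, r₂, hr₂ne, hF₂eq⟩ := hbuild _ hg₂'V hg₂'ne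
  have hF₂V : F₂ ∈ V := ((hPmem F₂).1 hF₂P).1
  have he₂C1 : ⁅F₂, Z₀⁆ ∈ C n 1 := C_le_of_le (i := 2) (j := 1) (by omega) (hqC2 F₂)
  have he₂u : B ⁅F₂, Z₀⁆ u = 0 := hqu F₂
  have hue₁ : B u ⁅F₁, Z₀⁆ = 0 := by rw [hsymm]; exact he₁u
  have hue₂ : B u ⁅F₂, Z₀⁆ = 0 := by rw [hsymm]; exact he₂u
  have he₁e₂ : B ⁅F₁, Z₀⁆ ⁅F₂, Z₀⁆ = 0 := by
    rw [hF₂eq, map_smul, smul_eq_mul, he₁g₂']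
    ring
  have he₂e₁ : B ⁅F₂, Z₀⁆ ⁅F₁, Z₀⁆ = 0 := by rw [hsymm]; exact he₁e₂
  have hF₂ne : F₂ ≠ 0 := by
    intro hzero
    rw [hzero, zero_lie] at hF₂unit
    simp at hF₂unit
  by_cases hr2 : ∀ Y ∈ V, ∃ t t' : ℝ, ⁅Y, Z₀⁆ = t • ⁅F₁, Z₀⁆ + t' • ⁅F₂, Z₀⁆
  · -- rank exactly 2
    have hPspan2 : ∀ p ∈ P, ∃ a b : ℝ, p = a • F₁ + b • F₂ := by
      intro p hp
      obtain ⟨t, t', ht⟩ := hr2 p ((hPmem p).1 hp).1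
      have hdiffK : p - (t • F₁ + t' • F₂) ∈ K := by
        rw [hKmem]
        refine ⟨Submodule.sub_mem _ ((hPmem p).1 hp).1 (Submodule.add_mem _
          (Submodule.smul_mem _ _ hF₁V) (Submodule.smul_mem _ _ hF₂V)), ?_⟩
        rw [sub_lie, add_lie, smul_lie, smul_lie, ht]
        abel
      have hdiffP : p - (t • F₁ + t' • F₂) ∈ P := Submodule.sub_mem _ hp (Submodule.add_mem _
        (Submodule.smul_mem _ _ hF₁P) (Submodule.smul_mem _ _ hF₂P))
      have := hKP0 _ hdiffP hdiffK
      exact ⟨t, t', by linear_combination (norm := module) this⟩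
    -- the main rotation identity
    have hmain : ∀ X ∈ V, ∀ W ∈ C n 1, B u W = 0 →
        B ⁅X, Z₀⁆ ⁅F₁, F₂⁆ = B ⁅X, Z₀⁆ W * B u ⁅F₁, F₂⁆ := by
      intro X hX W hW huW
      by_cases hX0 : X = 0
      · rw [hX0, zero_lie, map_zero]
        simp
      obtain ⟨A, hA, hAZ, hApin⟩ := PKG (hsymm := hsymm) (hGO := hGO) (hndC1 := hndC1)
        (hsk := hsk) hX (hposV X hX hX0) ((C n 1).add_mem hZ₀C1 hW)
      have hdata : ∃ X' W', X' ∈ V ∧ W' ∈ C n 1 ∧ B u W' = 0 ∧ A (Z₀ + W') = -⁅X', Z₀ + W'⁆ :=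
        ⟨X, W, hX, hW, huW, hAZ⟩
      obtain ⟨a₁, b₁, hc₁⟩ := hPspan2 _ (hAP A hA hdata F₁ hF₁P)
      obtain ⟨a₂, b₂, hc₂⟩ := hPspan2 _ (hAP A hA hdata F₂ hF₂P)
      obtain ⟨s₁, hs₁⟩ := hAq A hA hdata F₁ hF₁V
      obtain ⟨s₂, hs₂⟩ := hAq A hA hdata F₂ hF₂V
      have hqAF₁ : ⁅A F₁, Z₀⁆ = a₁ • ⁅F₁, Z₀⁆ + b₁ • ⁅F₂, Z₀⁆ := by
        rw [hc₁, add_lie, smul_lie, smul_lie]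
      have hqAF₂ : ⁅A F₂, Z₀⁆ = a₂ • ⁅F₁, Z₀⁆ + b₂ • ⁅F₂, Z₀⁆ := by
        rw [hc₂, add_lie, smul_lie, smul_lie]
      have ha₁ : a₁ = 0 := by
        have h1 : B (A ⁅F₁, Z₀⁆) ⁅F₁, Z₀⁆ = 0 := skew_self (hA := hA) (hsymm := hsymm) _
        rw [hs₁, hqAF₁] at h1
        simp only [map_add, map_smul, LinearMap.add_apply, LinearMap.smul_apply,
          smul_eq_mul] at h1
        rw [hF₁unit, he₂e₁, hue₁] at h1
        linarith
      have hb₂ : b₂ = 0 := by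
        have h1 : B (A ⁅F₂, Z₀⁆) ⁅F₂, Z₀⁆ = 0 := skew_self (hA := hA) (hsymm := hsymm) _
        rw [hs₂, hqAF₂] at h1
        simp only [map_add, map_smul, LinearMap.add_apply, LinearMap.smul_apply,
          smul_eq_mul] at h1
        rw [hF₂unit, he₁e₂, hue₂] at h1
        linarith
      have hAbeta : A ⁅F₁, F₂⁆ = 0 := by
        rw [hA.1 F₁ F₂, hc₁, hc₂, ha₁, hb₂]
        rw [zero_smul, zero_smul, zero_add, add_zero, smul_lie, lie_smul, lie_self,
          lie_self, smul_zero, smul_zero, add_zero]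
      have h5 := hA.2 (Z₀ + W) ⁅F₁, F₂⁆
      rw [hAbeta, map_zero, add_zero, hAZ, hbrZ X hX W hW huW] at h5
      simp only [map_neg, map_sub, map_smul, LinearMap.neg_apply, LinearMap.sub_apply,
        LinearMap.smul_apply, smul_eq_mul] at h5
      linarith
    have h0 : ∀ X ∈ V, B ⁅X, Z₀⁆ ⁅F₁, F₂⁆ = 0 := by
      intro X hX
      have := hmain X hX 0 (Submodule.zero_mem _) (by rw [map_zero])
      rw [map_zero] at this
      linarith [this]
    have hrot : B u ⁅F₁, F₂⁆ = 0 := by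
      have := hmain F₁ hF₁V ⁅F₁, Z₀⁆ he₁C1 hue₁
      rw [h0 F₁ hF₁V, hF₁unit] at this
      linarith
    -- b vanishes on K × V
    have hbK2 : ∀ κ ∈ K, ∀ Y' ∈ V, B u ⁅κ, Y'⁆ = 0 := by
      intro κ hκ Y' hY'
      have hκV := ((hKmem κ).1 hκ).1
      obtain ⟨t, t', hv⟩ := hr2 Y' hY'
      by_cases htt : t = 0 ∧ t' = 0
      · have hv0 : ⁅Y', Z₀⁆ = 0 := by rw [hv, htt.1, htt.2, zero_smul, zero_smul, add_zero]
        have hj := hJQ κ hκV Y' hY' F₁ hF₁V ⁅F₁, Z₀⁆ he₁u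
        rw [hqK κ hκ, map_zero, LinearMap.zero_apply, hv0, map_zero, LinearMap.zero_apply,
          hF₁unit] at hj
        linarith
      · have hYeV : t' • F₁ - t • F₂ ∈ V :=
          Submodule.sub_mem _ (Submodule.smul_mem _ _ hF₁V) (Submodule.smul_mem _ _ hF₂V)
        have hqYe : ⁅t' • F₁ - t • F₂, Z₀⁆ = t' • ⁅F₁, Z₀⁆ - t • ⁅F₂, Z₀⁆ := by
          rw [sub_lie, smul_lie, smul_lie]
        have heu : B ⁅t' • F₁ - t • F₂, Z₀⁆ u = 0 := hqu _
        have hBve : B ⁅Y', Z₀⁆ ⁅t' • F₁ - t • F₂, Z₀⁆ = 0 := by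
          rw [hv, hqYe]
          simp only [map_add, map_sub, map_smul, LinearMap.add_apply, LinearMap.sub_apply,
            LinearMap.smul_apply, smul_eq_mul]
          rw [hF₁unit, hF₂unit, he₁e₂, he₂e₁]
          ring
        have hBee : B ⁅t' • F₁ - t • F₂, Z₀⁆ ⁅t' • F₁ - t • F₂, Z₀⁆ = t' ^ 2 + t ^ 2 := by
          rw [hqYe]
          simp only [map_add, map_sub, map_smul, LinearMap.add_apply, LinearMap.sub_apply,
            LinearMap.smul_apply, smul_eq_mul]
          rw [hF₁unit, hF₂unit, he₁e₂, he₂e₁]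
          ring
        have hpos2 : 0 < t' ^ 2 + t ^ 2 := by
          rcases not_and_or.1 htt with h | h
          · have : 0 < t ^ 2 := by positivity
            nlinarith [sq_nonneg t']
          · have : 0 < t' ^ 2 := by positivity
            nlinarith [sq_nonneg t]
        have hj := hJQ κ hκV Y' hY' _ hYeV ⁅t' • F₁ - t • F₂, Z₀⁆ heu
        rw [hqK κ hκ, map_zero, LinearMap.zero_apply, hBve, hBee] at hj
        have : B u ⁅κ, Y'⁆ * (t' ^ 2 + t ^ 2) = 0 := by linarith
        rcases mul_eq_zero.1 this with h | h
        · exact h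
        · exact absurd h (ne_of_gt hpos2)
    -- conclude : b ≡ 0
    obtain ⟨κ, hκ, p, hp, hdec⟩ := hVdecomp Yb hYb
    obtain ⟨a, b, hpab⟩ := hPspan2 p hp
    obtain ⟨κ', hκ', p', hp', hdec'⟩ := hVdecomp Yb' hYb'
    obtain ⟨a', b', hpab'⟩ := hPspan2 p' hp'
    have hpV : p ∈ V := ((hPmem p).1 hp).1
    apply hbne
    have eA : B u ⁅Yb, Yb'⁆ = B u ⁅κ, Yb'⁆ + B u ⁅p, Yb'⁆ := by
      rw [hdec, add_lie, map_add]
    have eB : B u ⁅p, Yb'⁆ = B u ⁅p, κ'⁆ + B u ⁅p, p'⁆ := by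
      rw [hdec', lie_add, map_add]
    have eC : B u ⁅p, κ'⁆ = -(B u ⁅κ', p⁆) := by
      rw [(lie_skew p κ').symm, map_neg]
    have hf21 : B u ⁅F₂, F₁⁆ = -(B u ⁅F₁, F₂⁆) := by
      rw [(lie_skew F₂ F₁).symm, map_neg]
    have eD : B u ⁅p, p'⁆ = (a * b') * B u ⁅F₁, F₂⁆ + (b * a') * B u ⁅F₂, F₁⁆ := by
      rw [hpab, hpab']
      simp only [add_lie, lie_add, smul_lie, lie_smul, lie_self, smul_zero, map_add,
        map_smul, smul_eq_mul, add_zero, zero_add, mul_zero]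
      ring
    rw [eA, eB, eC, eD, hbK2 κ hκ Yb' hYb', hbK2 κ' hκ' p hpV, hf21, hrot]
    ring
  · -- rank at least 3
    push_neg at hr2
    obtain ⟨g₃, hg₃V, hg₃⟩ := hr2
    have hg₃'V : g₃ - B ⁅F₁, Z₀⁆ ⁅g₃, Z₀⁆ • F₁ - B ⁅F₂, Z₀⁆ ⁅g₃, Z₀⁆ • F₂ ∈ V :=
      Submodule.sub_mem _ (Submodule.sub_mem _ hg₃V (Submodule.smul_mem _ _ hF₁V))
        (Submodule.smul_mem _ _ hF₂V)
    have hqg₃' : ⁅g₃ - B ⁅F₁, Z₀⁆ ⁅g₃, Z₀⁆ • F₁ - B ⁅F₂, Z₀⁆ ⁅g₃, Z₀⁆ • F₂, Z₀⁆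
        = ⁅g₃, Z₀⁆ - B ⁅F₁, Z₀⁆ ⁅g₃, Z₀⁆ • ⁅F₁, Z₀⁆ - B ⁅F₂, Z₀⁆ ⁅g₃, Z₀⁆ • ⁅F₂, Z₀⁆ := by
      rw [sub_lie, sub_lie, smul_lie, smul_lie]
    have hg₃'ne : ⁅g₃ - B ⁅F₁, Z₀⁆ ⁅g₃, Z₀⁆ • F₁ - B ⁅F₂, Z₀⁆ ⁅g₃, Z₀⁆ • F₂, Z₀⁆ ≠ 0 := by
      rw [hqg₃']
      intro h
      exact hg₃ (B ⁅F₁, Z₀⁆ ⁅g₃, Z₀⁆) (B ⁅F₂, Z₀⁆ ⁅g₃, Z₀⁆)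
        (by linear_combination (norm := module) h)
    have he₁g₃' : B ⁅F₁, Z₀⁆ ⁅g₃ - B ⁅F₁, Z₀⁆ ⁅g₃, Z₀⁆ • F₁ - B ⁅F₂, Z₀⁆ ⁅g₃, Z₀⁆ • F₂, Z₀⁆
        = 0 := by
      rw [hqg₃', map_sub, map_sub, map_smul, map_smul, smul_eq_mul, smul_eq_mul,
        hF₁unit, he₁e₂]
      ring
    have he₂g₃' : B ⁅F₂, Z₀⁆ ⁅g₃ - B ⁅F₁, Z₀⁆ ⁅g₃, Z₀⁆ • F₁ - B ⁅F₂, Z₀⁆ ⁅g₃, Z₀⁆ • F₂, Z₀⁆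
        = 0 := by
      rw [hqg₃', map_sub, map_sub, map_smul, map_smul, smul_eq_mul, smul_eq_mul,
        hF₂unit, he₂e₁]
      ring
    obtain ⟨F₃, hF₃P, hF₃unit, r₃, hr₃ne, hF₃eq⟩ := hbuild _ hg₃'V hg₃'ne
    have hF₃V : F₃ ∈ V := ((hPmem F₃).1 hF₃P).1
    have he₁e₃ : B ⁅F₁, Z₀⁆ ⁅F₃, Z₀⁆ = 0 := by
      rw [hF₃eq, map_smul, smul_eq_mul, he₁g₃']
      ring
    have he₂e₃ : B ⁅F₂, Z₀⁆ ⁅F₃, Z₀⁆ = 0 := by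
      rw [hF₃eq, map_smul, smul_eq_mul, he₂g₃']
      ring
    have he₃e₁ : B ⁅F₃, Z₀⁆ ⁅F₁, Z₀⁆ = 0 := by rw [hsymm]; exact he₁e₃
    have he₃e₂ : B ⁅F₃, Z₀⁆ ⁅F₂, Z₀⁆ = 0 := by rw [hsymm]; exact he₂e₃
    -- b vanishes identically
    have hball : ∀ Y ∈ V, ∀ Y' ∈ V, B u ⁅Y, Y'⁆ = 0 := by
      intro Y hY Y' hY'
      obtain ⟨a, b, c, habc, hv, hw⟩ := exists_perp_scalar
        (B ⁅Y, Z₀⁆ ⁅F₁, Z₀⁆) (B ⁅Y, Z₀⁆ ⁅F₂, Z₀⁆) (B ⁅Y, Z₀⁆ ⁅F₃, Z₀⁆)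
        (B ⁅Y', Z₀⁆ ⁅F₁, Z₀⁆) (B ⁅Y', Z₀⁆ ⁅F₂, Z₀⁆) (B ⁅Y', Z₀⁆ ⁅F₃, Z₀⁆)
      have hYeV : a • F₁ + b • F₂ + c • F₃ ∈ V :=
        Submodule.add_mem _ (Submodule.add_mem _ (Submodule.smul_mem _ _ hF₁V)
          (Submodule.smul_mem _ _ hF₂V)) (Submodule.smul_mem _ _ hF₃V)
      have hqYe : ⁅a • F₁ + b • F₂ + c • F₃, Z₀⁆
          = a • ⁅F₁, Z₀⁆ + b • ⁅F₂, Z₀⁆ + c • ⁅F₃, Z₀⁆ := by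
        rw [add_lie, add_lie, smul_lie, smul_lie, smul_lie]
      have heu : B ⁅a • F₁ + b • F₂ + c • F₃, Z₀⁆ u = 0 := hqu _
      have hBYe : B ⁅Y, Z₀⁆ ⁅a • F₁ + b • F₂ + c • F₃, Z₀⁆ = 0 := by
        rw [hqYe]
        simp only [map_add, map_smul, LinearMap.add_apply, LinearMap.smul_apply, smul_eq_mul]
        linarith [hv]
      have hBY'e : B ⁅Y', Z₀⁆ ⁅a • F₁ + b • F₂ + c • F₃, Z₀⁆ = 0 := by
        rw [hqYe]
        simp only [map_add, map_smul, LinearMap.add_apply, LinearMap.smul_apply, smul_eq_mul]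
        linarith [hw]
      have hBee : B ⁅a • F₁ + b • F₂ + c • F₃, Z₀⁆ ⁅a • F₁ + b • F₂ + c • F₃, Z₀⁆
          = a ^ 2 + b ^ 2 + c ^ 2 := by
        rw [hqYe]
        simp only [map_add, map_smul, LinearMap.add_apply, LinearMap.smul_apply, smul_eq_mul]
        rw [hF₁unit, hF₂unit, hF₃unit, he₁e₂, he₂e₁, he₁e₃, he₃e₁, he₂e₃, he₃e₂]
        ring
      have hpos3 : 0 < a ^ 2 + b ^ 2 + c ^ 2 := by
        rcases not_and_or.1 habc with h | h
        · nlinarith [sq_nonneg b, sq_nonneg c, sq_nonneg a, sq_abs a, abs_pos.2 h]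
        rcases not_and_or.1 h with h' | h'
        · nlinarith [sq_nonneg a, sq_nonneg c, sq_abs b, abs_pos.2 h']
        · nlinarith [sq_nonneg a, sq_nonneg b, sq_abs c, abs_pos.2 h']
      have hj := hJQ Y hY Y' hY' _ hYeV ⁅a • F₁ + b • F₂ + c • F₃, Z₀⁆ heu
      rw [hBYe, hBY'e, hBee] at hj
      have : B u ⁅Y, Y'⁆ * (a ^ 2 + b ^ 2 + c ^ 2) = 0 := by linarith
      rcases mul_eq_zero.1 this with h | h
      · exact h
      · exact absurd h (ne_of_gt hpos3)
    exact hbne (hball Yb hYb Yb' hYb')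

end C7

section C8

variable [FiniteDimensional ℝ n]
variable (hGO' : IsGO B)
variable (hndC1' : ∀ x ∈ C n 1, (∀ y ∈ C n 1, B x y = 0) → x = 0)
variable (hnd' : ∀ X : n, (∀ Y : n, B X Y = 0) → X = 0)

include hsymm in
lemma exists_neg {W : Submodule ℝ n} (hWnd : ∀ x ∈ W, (∀ y ∈ W, B x y = 0) → x = 0)
    {x₀ : n} (hx₀ : x₀ ∈ W) (hx₀ne : x₀ ≠ 0) (hx₀le : B x₀ x₀ ≤ 0) :
    ∃ x ∈ W, B x x < 0 := by
  rcases lt_or_eq_of_le hx₀le with h | h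
  · exact ⟨x₀, hx₀, h⟩
  · obtain ⟨y, hy, hc⟩ : ∃ y ∈ W, B x₀ y ≠ 0 := by
      by_contra hno
      push_neg at hno
      exact hx₀ne (hWnd x₀ hx₀ hno)
    set c := B x₀ y with hcdef
    set q := B y y with hq
    set s : ℝ := if q > 0 then 1 / q else 1 with hs
    refine ⟨x₀ + (-(s * c)) • y, Submodule.add_mem _ hx₀ (Submodule.smul_mem _ _ hy), ?_⟩
    have hyx : B y x₀ = c := hsymm y x₀
    have hexp : B (x₀ + (-(s * c)) • y) (x₀ + (-(s * c)) • y)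
        = -2 * s * c ^ 2 + s ^ 2 * c ^ 2 * q := by
      simp only [map_add, map_smul, LinearMap.add_apply, LinearMap.smul_apply, smul_eq_mul]
      rw [hyx, h]
      ring
    rw [hexp]
    have hc2 : 0 < c ^ 2 := by positivity
    rcases le_or_gt q 0 with hq0 | hq0
    · have hs1 : s = 1 := by rw [hs, if_neg (not_lt.2 hq0)]
      rw [hs1]
      nlinarith
    · have hs1 : s = 1 / q := by rw [hs, if_pos hq0]
      rw [hs1]
      have : -2 * (1 / q) * c ^ 2 + (1 / q) ^ 2 * c ^ 2 * q = -(c ^ 2 / q) := by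
        field_simp
        ring
      rw [this]
      have hpos : 0 < c ^ 2 / q := by positivity
      linarith

include hL hsymm hGO' hndC1' hnd' in
theorem C2_eq_bot [LieRing.IsNilpotent n] : C n 2 = ⊥ := by
  have hsk' : ∀ (U z w : n), z ∈ C n 1 → w ∈ C n 1 → B ⁅U, z⁆ w = -(B ⁅U, w⁆ z) :=
    skewAll (hsymm := hsymm) (hGO := hGO') (hndC1 := hndC1')
  have hVnd : ∀ x ∈ B.orthogonal (C n 1), (∀ y ∈ B.orthogonal (C n 1), B x y = 0) → x = 0 := by
    intro x hx hall
    refine hnd' x ?_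
    intro y
    obtain ⟨Xv, hXv, Zv, hZv, rfl⟩ := exists_decomp hsymm hndC1' y
    rw [map_add, hall Xv hXv, orth_pair' hsymm hx hZv]
    ring
  have hsplit : (∀ m ∈ C n 1, m ≠ 0 → 0 < B m m) ∨
      (∀ v ∈ B.orthogonal (C n 1), v ≠ 0 → 0 < B v v) := by
    by_contra hcon
    push_neg at hcon
    obtain ⟨⟨m₀, hm₀, hm₀ne, hm₀le⟩, ⟨v₀, hv₀, hv₀ne, hv₀le⟩⟩ := hcon
    obtain ⟨m₁, hm₁, hm₁neg⟩ := exists_neg (hsymm := hsymm) hndC1' hm₀ hm₀ne hm₀le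
    obtain ⟨v₁, hv₁, hv₁neg⟩ := exists_neg (hsymm := hsymm) hVnd hv₀ hv₀ne hv₀le
    exact lorentz_no_two_neg hL hsymm hm₁neg hv₁neg (orth_pair hv₁ hm₁)
  rcases hsplit with hposM | hposV'
  · exact posdef_kill (hsymm := hsymm) (hsk := hsk') hposM
  · have h4 : C n 4 = ⊥ := C4_eq_bot (hsk := hsk') (hL := hL) (hsymm := hsymm)
    by_cases h3 : C n 3 = ⊥
    · exact C2_bot_of_C3_bot (hsk := hsk') (hsymm := hsymm) (hL := hL) (hndC1 := hndC1') h3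
    · exact absurd (caseB (hL := hL) (hsymm := hsymm) (hGO := hGO') (hndC1 := hndC1')
        (hsk := hsk') (hnd := hnd') (hposV := hposV') h3 h4) (fun h => h)

end C8

end Stmt0

/-- a nilpotent metric Lie algebra with Lorentz inner product whose restriction to
the derived algebra is nondegenerate and which satisfies the GO condition is abelian or
2-step nilpotent. -/
theorem stmt0 {n : Type*} [LieRing n] [LieAlgebra ℝ n] [FiniteDimensional ℝ n]
    [LieRing.IsNilpotent n] (B : LinearMap.BilinForm ℝ n)
    (hsymm : ∀ X Y : n, B X Y = B Y X)
    (hnondeg : ∀ X : n, (∀ Y : n, B X Y = 0) → X = 0)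
    (hLorentz : IsLorentz B)
    (hnondeg' : ∀ X ∈ derived n, (∀ Y ∈ derived n, B X Y = 0) → X = 0)
    (hGO : IsGO B) :
    ∀ X Y Z : n, ⁅⁅X, Y⁆, Z⁆ = 0 := by
  intro X Y Z
  have hndC1 : ∀ x ∈ Stmt0.C n 1, (∀ y ∈ Stmt0.C n 1, B x y = 0) → x = 0 := by
    rw [← Stmt0.derived_eq]
    exact hnondeg'
  have h2 := Stmt0.C2_eq_bot (hL := hLorentz) (hsymm := hsymm) (hGO' := hGO)
    (hndC1' := hndC1) (hnd' := hnondeg)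
  have : ⁅⁅X, Y⁆, Z⁆ ∈ Stmt0.C n 2 :=
    Stmt0.lie_mem_C_succ' (Stmt0.bracket_mem_C1 X Y) Z
  rw [h2] at this
  simpa using this
end

section
/- Let (𝔫, ⟨·,·⟩) be a metric Lie algebra with 𝔫 nilpotent, ⟨·,·⟩ Lorentz, satisfying the GO condition, and suppose the restriction of ⟨·,·⟩ to [𝔫,𝔫] is degenerate. Then (𝔫, ⟨·,·⟩) is a Lorentz double extension of a positive definite metric Lie algebra satisfying the GO condition; explicitly, there exist e, f ∈ 𝔫 such that: e ≠ 0, e ∈ [𝔫,𝔫], ⟨e,e⟩ = ⟨f,f⟩ = 0, ⟨e,f⟩ = 1; [𝔫,𝔫] ⊆ e^⊥ (so e^⊥ is an ideal of 𝔫); [e,Z] = 0 for every Z ∈ e^⊥; 𝔫 = ℝf ⊕ e^⊥ as a vector space; the restriction of ⟨·,·⟩ to (ℝe + ℝf)^⊥ is positive definite; and the quotient Lie algebra e^⊥/ℝe, equipped with the inner product induced by ⟨·,·⟩ (which is well defined and positive definite), satisfies the GO condition, and consequently is abelian or 2-step nilpotent. -/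
/-! ### Auxiliary: a custom lower central series by submodule spans -/

/-- custom lower central series as submodules -/
def lcsS (m : Type*) [LieRing m] [LieAlgebra ℝ m] : ℕ → Submodule ℝ m
  | 0 => ⊤
  | (k+1) => Submodule.span ℝ {z : m | ∃ (x y : m), y ∈ lcsS m k ∧ ⁅x, y⁆ = z}

section lcsSfacts

variable {m : Type*} [LieRing m] [LieAlgebra ℝ m]

lemma lcsS_zero : lcsS m 0 = ⊤ := rfl

lemma lcsS_succ (k : ℕ) :
    lcsS m (k+1) = Submodule.span ℝ {z : m | ∃ (x y : m), y ∈ lcsS m k ∧ ⁅x, y⁆ = z} := rfl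

lemma lie_mem_lcsS {k : ℕ} {y : m} (hy : y ∈ lcsS m k) (x : m) : ⁅x, y⁆ ∈ lcsS m (k+1) := by
  rw [lcsS_succ]
  exact Submodule.subset_span ⟨x, y, hy, rfl⟩

lemma lie_mem_lcsS' {k : ℕ} {y : m} (hy : y ∈ lcsS m k) (x : m) : ⁅y, x⁆ ∈ lcsS m (k+1) := by
  rw [← lie_skew]
  exact Submodule.neg_mem _ (lie_mem_lcsS hy x)

lemma lcsS_succ_le : ∀ k, lcsS m (k+1) ≤ lcsS m k := by
  intro k
  induction k with
  | zero => exact le_top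
  | succ k ih =>
    rw [lcsS_succ (k+1)]
    refine Submodule.span_le.2 ?_
    rintro z ⟨x, y, hy, rfl⟩
    exact lie_mem_lcsS (ih hy) x

lemma lcsS_le_of_le {j k : ℕ} (h : j ≤ k) : lcsS m k ≤ lcsS m j := by
  induction k with
  | zero => simp_all
  | succ k ih =>
    rcases Nat.eq_or_lt_of_le h with rfl | h'
    · exact le_rfl
    · exact (lcsS_succ_le k).trans (ih (Nat.lt_succ_iff.mp h'))

lemma lie_lcsS_mem : ∀ (j : ℕ), ∀ {i : ℕ} {x y : m}, x ∈ lcsS m i → y ∈ lcsS m j →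
    ⁅x, y⁆ ∈ lcsS m (i + j + 1) := by
  intro j
  induction j with
  | zero => intro i x y hx _; simpa using lie_mem_lcsS' hx y
  | succ j ih =>
    intro i x y hx hy
    rw [lcsS_succ] at hy
    induction hy using Submodule.span_induction with
    | mem z hz =>
      obtain ⟨a, b, hb, rfl⟩ := hz
      have h1 : ⁅x, ⁅a, b⁆⁆ = ⁅⁅x, a⁆, b⁆ + ⁅a, ⁅x, b⁆⁆ := leibniz_lie x a b
      rw [h1]
      refine Submodule.add_mem _ ?_ ?_
      · have hxa : ⁅x, a⁆ ∈ lcsS m (i+1) := lie_mem_lcsS' hx a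
        have := ih hxa hb
        have harith : (i + 1) + j + 1 = i + (j+1) + 1 := by omega
        rwa [harith] at this
      · have hxb : ⁅x, b⁆ ∈ lcsS m (i + j + 1) := ih hx hb
        have h3 : ⁅⁅x, b⁆, a⁆ ∈ lcsS m (i + j + 2) := lie_mem_lcsS' hxb a
        have h2 : ⁅a, ⁅x, b⁆⁆ = -⁅⁅x, b⁆, a⁆ := (lie_skew _ _).symm
        rw [h2]
        have harith : i + j + 2 = i + (j+1) + 1 := by omega
        rw [← harith]
        exact Submodule.neg_mem _ h3
    | zero => simp
    | add a b _ _ pa pb => rw [lie_add]; exact Submodule.add_mem _ pa pb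
    | smul c a _ pa => rw [lie_smul]; exact Submodule.smul_mem _ _ pa

/-- skew derivations preserve the custom lcs -/
lemma skewDeriv_lcsS {B : LinearMap.BilinForm ℝ m} {A : m →ₗ[ℝ] m} (hA : IsSkewDeriv B A) :
    ∀ k, ∀ x ∈ lcsS m k, A x ∈ lcsS m k := by
  intro k
  induction k with
  | zero => intro x _; trivial
  | succ k ih =>
    intro x hx
    rw [lcsS_succ] at hx
    induction hx using Submodule.span_induction with
    | mem z hz =>
      obtain ⟨a, b, hb, rfl⟩ := hz
      rw [hA.1 a b]
      exact Submodule.add_mem _ (lie_mem_lcsS hb (A a)) (lie_mem_lcsS (ih b hb) a)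
    | zero => simp
    | add a b _ _ pa pb => rw [map_add]; exact Submodule.add_mem _ pa pb
    | smul c a _ pa => rw [map_smul]; exact Submodule.smul_mem _ _ pa

/-- custom lcs is below mathlib's lower central series -/
lemma lcsS_le_lcs : ∀ k, lcsS m k ≤ (LieModule.lowerCentralSeries ℝ m m k : LieSubmodule ℝ m m) := by
  intro k
  induction k with
  | zero => simp [lcsS]
  | succ k ih =>
    rw [lcsS_succ]
    refine Submodule.span_le.2 ?_
    rintro z ⟨x, y, hy, rfl⟩
    have : ⁅x, y⁆ ∈ LieModule.lowerCentralSeries ℝ m m (k+1) := by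
      rw [LieModule.lowerCentralSeries_succ]
      exact LieSubmodule.lie_mem_lie (LieSubmodule.mem_top _) (ih hy)
    exact this

lemma lcsS_eq_bot_of_nilpotent [LieRing.IsNilpotent m] : ∃ N, lcsS m N = ⊥ := by
  obtain ⟨k, hk⟩ := (by rw [← LieModule.isNilpotent_iff]; infer_instance :
    ∃ k, LieModule.lowerCentralSeries ℝ m m k = ⊥)
  refine ⟨k, le_bot_iff.1 ?_⟩
  have := lcsS_le_lcs (m := m) k
  rw [hk] at this
  exact fun x hx => this hx

end lcsSfacts

/-! ### Auxiliary: skew + nilpotent endomorphisms -/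

lemma skew_nilp {V : Type*} [AddCommGroup V] [Module ℝ V]
    (B : LinearMap.BilinForm ℝ V) (hsymm : ∀ x y : V, B x y = B y x)
    (U K : Submodule ℝ V) (C : Module.End ℝ V)
    (hCU : ∀ x ∈ U, C x ∈ U)
    (hskew : ∀ x ∈ U, ∀ y ∈ U, B (C x) y = - B x (C y))
    (hnull : ∀ x ∈ U, B x x = 0 → x ∈ K)
    (hKC : ∀ v ∈ K, C v = 0)
    (hKB : ∀ v ∈ K, ∀ x ∈ U, B v x = 0)
    (N : ℕ) (hN : ∀ x : V, (C^N) x = 0) :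
    ∀ x ∈ U, C x ∈ K := by
  have hpow_succ : ∀ (a : ℕ) (x : V), (C^(a+1)) x = C ((C^a) x) := by
    intro a x
    rw [pow_succ']
    rfl
  have hpow_succ' : ∀ (a : ℕ) (x : V), (C^(a+1)) x = (C^a) (C x) := by
    intro a x
    rw [pow_succ]
    rfl
  have hpow_add : ∀ (a b : ℕ) (x : V), (C^(a+b)) x = (C^a) ((C^b) x) := by
    intro a b x
    rw [pow_add]
    rfl
  have hpowU : ∀ (j : ℕ), ∀ x ∈ U, (C^j) x ∈ U := by
    intro j
    induction j with
    | zero => intro x hx; simpa using hx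
    | succ j ih =>
      intro x hx
      rw [hpow_succ]
      exact hCU _ (ih x hx)
  have hswap : ∀ (a b : ℕ), ∀ x ∈ U, B ((C^a) x) ((C^b) x) = (-1:ℝ)^a * B x ((C^(a+b)) x) := by
    intro a
    induction a with
    | zero => intro b x hx; simp
    | succ a ih =>
      intro b x hx
      have h3 : B ((C^(a+1)) x) ((C^b) x) = - B ((C^a) x) ((C^(b+1)) x) := by
        rw [hpow_succ a x, hpow_succ b x]
        exact hskew _ (hpowU a x hx) _ (hpowU b x hx)
      rw [h3, ih (b+1) x hx]
      have : a + (b+1) = (a+1) + b := by omega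
      rw [this]
      ring
  have hstep : ∀ (k : ℕ), 1 ≤ k → (∀ x ∈ U, (C^(k+1)) x ∈ K) → (∀ x ∈ U, (C^k) x ∈ K) := by
    intro k hk hind x hx
    refine hnull _ (hpowU k x hx) ?_
    have h1 : B ((C^k) x) ((C^k) x) = (-1:ℝ)^k * B x ((C^(k+k)) x) := hswap k k x hx
    obtain ⟨j, rfl⟩ : ∃ j, k = j + 1 := ⟨k - 1, by omega⟩
    have hv : (C^(j+2)) x ∈ K := hind x hx
    have h4 : B x ((C^((j+1)+(j+1))) x) = 0 := by
      have h2 : (C^((j+1)+(j+1))) x = (C^j) ((C^(j+2)) x) := by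
        rw [← hpow_add]
        congr 2
        omega
      rcases Nat.eq_zero_or_pos j with rfl | hj
      · rw [h2]
        simp only [pow_zero, Module.End.one_apply]
        rw [hsymm]
        exact hKB _ hv x hx
      · obtain ⟨i, rfl⟩ : ∃ i, j = i + 1 := ⟨j - 1, by omega⟩
        have h5 : (C^(i+1)) ((C^(i+3)) x) = (C^i) (C ((C^(i+3)) x)) := hpow_succ' i _
        have h6 : (C^(i+3)) x = (C^(i+1+2)) x := by norm_num
        rw [h2, h5, h6, hKC _ hv]
        simp
    rw [h4, mul_zero] at h1
    exact h1
  have hmain : ∀ d : ℕ, ∀ x ∈ U, (C^(max 1 (N+1-d))) x ∈ K := by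
    intro d
    induction d with
    | zero =>
      intro x hx
      have h7 : max 1 (N+1-0) = N+1 := by omega
      rw [h7, hpow_succ, hN x, map_zero]
      exact Submodule.zero_mem _
    | succ d ih =>
      intro x hx
      by_cases hc : N + 1 - (d+1) ≥ 1
      · have h8 : max 1 (N+1-(d+1)) = N - d := by omega
        have h9 : max 1 (N+1-d) = (N - d) + 1 := by omega
        rw [h8]
        refine hstep (N-d) (by omega) ?_ x hx
        intro z hz
        have := ih z hz
        rwa [h9] at this
      · have h8 : max 1 (N+1-(d+1)) = 1 := by omega
        rw [h8]
        by_cases hd : N + 1 - d ≥ 2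
        · have h9 : max 1 (N+1-d) = 2 := by omega
          refine hstep 1 le_rfl ?_ x hx
          intro z hz
          have := ih z hz
          rwa [h9] at this
        · have h9 : max 1 (N+1-d) = 1 := by omega
          have := ih x hx
          rwa [h9] at this
  intro x hx
  have := hmain N x hx
  have h5 : max 1 (N+1-N) = 1 := by omega
  rw [h5] at this
  simpa using this

/-! ### Auxiliary: Lorentz forms are positive semidefinite on the orthogonal of a null vector -/

lemma lorentz_psd {V : Type*} [AddCommGroup V] [Module ℝ V]
    (B : LinearMap.BilinForm ℝ V) (hsymm : ∀ x y : V, B x y = B y x)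
    (hL : IsLorentz B) {e : V} (he : e ≠ 0) (hee : B e e = 0) :
    ∀ X : V, B e X = 0 → 0 ≤ B X X ∧ (B X X = 0 → ∃ c : ℝ, X = c • e) := by
  obtain ⟨m, b, i₀, horth, hneg, hpos⟩ := hL
  have hexp : ∀ v w : V, B v w = ∑ i, (b.repr v i) * (b.repr w i) * B (b i) (b i) := by
    intro v w
    conv_lhs => rw [← b.sum_repr v]
    rw [map_sum, LinearMap.sum_apply]
    refine Finset.sum_congr rfl ?_
    intro i _
    rw [map_smul, LinearMap.smul_apply, smul_eq_mul]
    conv_lhs => rw [← b.sum_repr w, map_sum]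
    rw [Finset.mul_sum]
    rw [Finset.sum_eq_single i]
    · rw [map_smul, smul_eq_mul]; ring
    · intro j _ hj
      rw [map_smul, smul_eq_mul, horth i j (Ne.symm hj)]
      ring
    · intro h; exact absurd (Finset.mem_univ i) h
  have hdiag : ∀ i, i ≠ i₀ → (0:ℝ) < B (b i) (b i) := hpos
  have he0 : b.repr e i₀ ≠ 0 := by
    intro h0
    have h1 : B e e = ∑ i, (b.repr e i)^2 * B (b i) (b i) := by
      rw [hexp]; refine Finset.sum_congr rfl fun i _ => by ring
    have h2 : ∀ i ∈ Finset.univ, (0:ℝ) ≤ (b.repr e i)^2 * B (b i) (b i) := by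
      intro i _
      rcases eq_or_ne i i₀ with rfl | hi
      · rw [h0]; simp
      · exact mul_nonneg (sq_nonneg _) (le_of_lt (hdiag i hi))
    have h3 : ∀ i ∈ Finset.univ, (b.repr e i)^2 * B (b i) (b i) = 0 := by
      rw [← Finset.sum_eq_zero_iff_of_nonneg h2, ← h1, hee]
    have h4 : ∀ i, b.repr e i = 0 := by
      intro i
      rcases eq_or_ne i i₀ with rfl | hi
      · exact h0
      · have h7 := h3 i (Finset.mem_univ i)
        have hne : B (b i) (b i) ≠ 0 := ne_of_gt (hdiag i hi)
        have h8 : (b.repr e i)^2 = 0 := by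
          rcases mul_eq_zero.1 h7 with h | h
          · exact h
          · exact absurd h hne
        exact pow_eq_zero_iff (by norm_num) |>.1 h8
    apply he
    have h9 : b.repr e = 0 := by ext i; simp [h4 i]
    simpa [h9] using (b.sum_repr e).symm
  intro X heX
  set μ := b.repr X i₀ / b.repr e i₀ with hμ
  set X' := X - μ • e with hX'
  have hX'i₀ : b.repr X' i₀ = 0 := by
    rw [hX', map_sub, map_smul]
    simp only [Finsupp.coe_sub, Finsupp.coe_smul, Pi.sub_apply, Pi.smul_apply, smul_eq_mul]
    rw [hμ, div_mul_cancel₀ _ he0, sub_self]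
  have hBX' : B X' X' = B X X := by
    rw [hX']
    simp only [map_sub, map_smul, LinearMap.sub_apply, LinearMap.smul_apply, smul_eq_mul]
    rw [hee]
    have h1 : B X e = 0 := by rw [hsymm]; exact heX
    rw [h1, heX]
    ring
  have hsumX' : B X' X' = ∑ i, (b.repr X' i)^2 * B (b i) (b i) := by
    rw [hexp]; exact Finset.sum_congr rfl fun i _ => by ring
  have hterms : ∀ i ∈ Finset.univ, (0:ℝ) ≤ (b.repr X' i)^2 * B (b i) (b i) := by
    intro i _
    rcases eq_or_ne i i₀ with rfl | hi
    · rw [hX'i₀]; simp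
    · exact mul_nonneg (sq_nonneg _) (le_of_lt (hdiag i hi))
  constructor
  · rw [← hBX', hsumX']
    exact Finset.sum_nonneg hterms
  · intro hXX
    refine ⟨μ, ?_⟩
    have hzero : B X' X' = 0 := by rw [hBX', hXX]
    have h3 : ∀ i ∈ Finset.univ, (b.repr X' i)^2 * B (b i) (b i) = 0 := by
      rw [← Finset.sum_eq_zero_iff_of_nonneg hterms, ← hsumX', hzero]
    have h4 : X' = 0 := by
      have h5 : ∀ i, b.repr X' i = 0 := by
        intro i
        rcases eq_or_ne i i₀ with rfl | hi
        · exact hX'i₀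
        · have h7 := h3 i (Finset.mem_univ i)
          have hne : B (b i) (b i) ≠ 0 := ne_of_gt (hdiag i hi)
          have h6 : (b.repr X' i)^2 = 0 := by
            rcases mul_eq_zero.1 h7 with h | h
            · exact h
            · exact absurd h hne
          exact pow_eq_zero_iff (by norm_num) |>.1 h6
      have h9 : b.repr X' = 0 := by ext i; simp [h5 i]
      simpa [h9] using (b.sum_repr X').symm
    have h10 : X - μ • e = 0 := h4
    linear_combination (norm := module) h10

/-! ### Auxiliary: Gordon's theorem -/

/-- Gordon's theorem: positive definite GO nilpotent metric Lie algebras are 2-step. -/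
lemma gordon {m : Type*} [LieRing m] [LieAlgebra ℝ m] [FiniteDimensional ℝ m]
    (B : LinearMap.BilinForm ℝ m) (hsymm : ∀ x y : m, B x y = B y x)
    (hpos : ∀ x : m, x ≠ 0 → 0 < B x x) (hGO : IsGO B)
    (hnil : ∃ N, lcsS m N = ⊥) :
    ∀ x y z : m, ⁅⁅x, y⁆, z⁆ = 0 := by
  obtain ⟨N, hN⟩ := hnil
  suffices h2 : lcsS m 2 = ⊥ by
    intro x y z
    have h1 : ⁅x, y⁆ ∈ lcsS m 1 := lie_mem_lcsS (by rw [lcsS_zero]; trivial) x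
    have h3 : ⁅⁅x, y⁆, z⁆ ∈ lcsS m 2 := lie_mem_lcsS' h1 z
    rw [h2] at h3
    simpa using h3
  by_contra h2
  classical
  have hex : ∃ k, lcsS m k = ⊥ := ⟨N, hN⟩
  set q := Nat.find hex with hqdef
  have hq : lcsS m q = ⊥ := Nat.find_spec hex
  have hlt : ∀ j < q, lcsS m j ≠ ⊥ := fun j hj => Nat.find_min hex hj
  have hq3 : 3 ≤ q := by
    by_contra hq3
    push_neg at hq3
    exact h2 (le_bot_iff.1 ((lcsS_le_of_le (by omega : q ≤ 2)).trans hq.le))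
  set p := q - 1 with hpdef
  have hp1 : p + 1 = q := by omega
  have hp2 : 2 ≤ p := by omega
  have hpne : lcsS m p ≠ ⊥ := hlt p (by omega)
  set U := lcsS m (p-1) with hUdef
  have hkey : ∀ w ∈ B.orthogonal U, ∀ x ∈ U, ⁅x, w⁆ = 0 := by
    intro w hw x hx
    have hwU : ∀ u ∈ U, B u w = 0 := by
      intro u hu
      exact (LinearMap.BilinForm.mem_orthogonal_iff.1 hw) u hu
    set C : Module.End ℝ m := -((LieAlgebra.ad ℝ m) w) with hCdef
    have hCapp : ∀ z : m, C z = ⁅z, w⁆ := by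
      intro z
      rw [hCdef, LinearMap.neg_apply, LieAlgebra.ad_apply, ← lie_skew, neg_neg]
    have hq0 : ∀ x ∈ U, B ⁅x, w⁆ x = 0 := by
      intro x hx
      obtain ⟨A, k, hA, hGOx⟩ := hGO x
      have h4 := hGOx w
      rw [map_add, LinearMap.add_apply] at h4
      have h5 : B x w = 0 := hwU x hx
      have h6 : B (A w) x = - B w (A x) := by
        have := hA.2 w x
        linarith
      have h7 : B w (A x) = 0 := by
        rw [hsymm]
        exact hwU _ (skewDeriv_lcsS hA _ x hx)
      rw [h5, mul_zero, h6, h7] at h4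
      linarith
    have hpol : ∀ a ∈ U, ∀ b ∈ U, B ⁅a, w⁆ b = - B a ⁅b, w⁆ := by
      intro a ha b hb
      have hab := hq0 (a + b) (Submodule.add_mem _ ha hb)
      have haa := hq0 a ha
      have hbb := hq0 b hb
      rw [add_lie] at hab
      simp only [map_add, LinearMap.add_apply] at hab
      have h7 : B ⁅a,w⁆ b + B ⁅b,w⁆ a = 0 := by linarith
      have h8 : B a ⁅b,w⁆ = B ⁅b,w⁆ a := hsymm _ _
      linarith
    have hsn := skew_nilp B hsymm U ⊥ C
      (fun z hz => by
        rw [hCapp]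
        have h9 : ⁅z, w⁆ ∈ lcsS m ((p-1) + 0 + 1) := lie_lcsS_mem 0 hz (by rw [lcsS_zero]; trivial)
        have h10 : (p-1) + 0 + 1 = p := by omega
        rw [h10] at h9
        exact lcsS_le_of_le (by omega : p - 1 ≤ p) h9)
      (fun a ha b hb => by rw [hCapp, hCapp]; exact hpol a ha b hb)
      (fun z hz hz0 => by
        rcases eq_or_ne z 0 with rfl | hzne
        · exact Submodule.zero_mem _
        · exact absurd hz0 (ne_of_gt (hpos z hzne)))
      (fun v hv => by rw [Submodule.mem_bot] at hv; simp [hv])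
      (fun v hv x _ => by rw [Submodule.mem_bot] at hv; simp [hv])
      N
      (fun z => by
        have hmem : ∀ k, (C^k) z ∈ lcsS m k → (C^(k+1)) z ∈ lcsS m (k+1) := by
          intro k hk
          have h12 : (C^(k+1)) z = C ((C^k) z) := by rw [pow_succ']; rfl
          rw [h12, hCapp]
          exact lie_mem_lcsS' hk w
        have hall : ∀ k, (C^k) z ∈ lcsS m k := by
          intro k
          induction k with
          | zero => rw [lcsS_zero]; trivial
          | succ k ih => exact hmem k ih
        have h13 := hall N
        rw [hN] at h13
        simpa using h13)
    have h11 := hsn x hx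
    rw [hCapp] at h11
    simpa using h11
  have hrefl : B.IsRefl := fun a b hab => by rw [hsymm]; exact hab
  have hndU : (B.restrict U).Nondegenerate := by
    have hsl : (B.restrict U).SeparatingLeft := by
      intro z hz
      have hzz := hz z
      simp only [LinearMap.BilinForm.restrict_apply] at hzz
      rcases eq_or_ne (z : m) 0 with h | h
      · exact Subtype.ext h
      · exact absurd hzz (ne_of_gt (hpos _ h))
    exact ⟨hsl, fun z hz => hsl z (fun y => by
      show B (z : m) (y : m) = 0; rw [hsymm]; exact hz y)⟩
  have hcompl := LinearMap.BilinForm.isCompl_orthogonal_of_restrict_nondegenerate hrefl hndU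
  have hsup : U ⊔ B.orthogonal U = ⊤ := hcompl.sup_eq_top
  apply hpne
  have hps : p = (p-1) + 1 := by omega
  rw [eq_bot_iff, hps, lcsS_succ]
  refine Submodule.span_le.2 ?_
  rintro z ⟨x, y, hy, rfl⟩
  have hxmem : x ∈ U ⊔ B.orthogonal U := by rw [hsup]; trivial
  obtain ⟨u, hu, w, hw, rfl⟩ := Submodule.mem_sup.1 hxmem
  have h12 : ⁅w, y⁆ = 0 := by
    rw [← neg_eq_zero, lie_skew]
    exact hkey w hw y hy
  have h13 : ⁅u, y⁆ ∈ lcsS m ((p-1) + (p-1) + 1) := lie_lcsS_mem (p-1) hu hy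
  have h14 : lcsS m ((p-1) + (p-1) + 1) ≤ lcsS m (p+1) := lcsS_le_of_le (by omega)
  have h15 : ⁅u + w, y⁆ = ⁅u, y⁆ := by rw [add_lie, h12, add_zero]
  rw [SetLike.mem_coe, h15]
  have h16 := h14 h13
  rw [hp1, hq] at h16
  exact h16

/-- a nilpotent Lorentz metric Lie algebra satisfying the GO condition whose form
is degenerate on the derived algebra is a Lorentz double extension of a positive definite
metric Lie algebra satisfying the GO condition (which is abelian or 2-step nilpotent). -/
theorem stmt4 {n : Type*} [LieRing n] [LieAlgebra ℝ n] [FiniteDimensional ℝ n]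
    [LieRing.IsNilpotent n] (B : LinearMap.BilinForm ℝ n)
    (hsymm : ∀ X Y : n, B X Y = B Y X)
    (hnondeg : ∀ X : n, (∀ Y : n, B X Y = 0) → X = 0)
    (hLorentz : IsLorentz B)
    (hGO : IsGO B)
    (hdeg : ∃ X ∈ derived n, X ≠ 0 ∧ ∀ Y ∈ derived n, B X Y = 0) :
    ∃ e f : n,
      -- `e` is a nonzero null vector of the derived algebra, `f` a null vector pairing with it
      e ≠ 0 ∧ e ∈ derived n ∧ B e e = 0 ∧ B f f = 0 ∧ B e f = 1 ∧
      -- the derived algebra is contained in `e^⊥`, and `e^⊥` is a subalgebra (hence an ideal)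
      (∀ X Y : n, B e ⁅X, Y⁆ = 0) ∧
      -- `e` is central in `e^⊥`
      (∀ Z : n, B e Z = 0 → ⁅e, Z⁆ = 0) ∧
      -- `𝔫 = ℝ f ⊕ e^⊥` as a vector space
      (Submodule.span ℝ {f} ⊓ LinearMap.ker (B e) = ⊥) ∧
      (Submodule.span ℝ {f} ⊔ LinearMap.ker (B e) = ⊤) ∧
      -- the restriction of the form to `(ℝ e + ℝ f)^⊥` is positive definite
      (∀ X : n, B e X = 0 → B f X = 0 → X ≠ 0 → 0 < B X X) ∧
      -- the quotient `e^⊥ / ℝ e`, with the induced inner product, is a positive definite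
      -- metric Lie algebra satisfying the GO condition, hence abelian or 2-step nilpotent
      (∃ (m₀ : Type) (_ : LieRing m₀) (_ : LieAlgebra ℝ m₀) (_ : FiniteDimensional ℝ m₀)
          (B₀ : LinearMap.BilinForm ℝ m₀) (π : n →ₗ[ℝ] m₀),
        (∀ x y : m₀, B₀ x y = B₀ y x) ∧
        (∀ x : m₀, x ≠ 0 → 0 < B₀ x x) ∧
        -- `π` restricted to `e^⊥` is the quotient map by `ℝ e`
        (∀ X Y : n, B e X = 0 → B e Y = 0 → π ⁅X, Y⁆ = ⁅π X, π Y⁆) ∧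
        (∀ X Y : n, B e X = 0 → B e Y = 0 → B₀ (π X) (π Y) = B X Y) ∧
        (LinearMap.ker (B e)).map π = ⊤ ∧
        (∀ X : n, B e X = 0 → (π X = 0 ↔ ∃ c : ℝ, X = c • e)) ∧
        IsGO B₀ ∧
        (∀ x y z : m₀, ⁅⁅x, y⁆, z⁆ = 0)) := by
  classical
  obtain ⟨e, heD, hene, hrad⟩ := hdeg
  have hee : B e e = 0 := hrad e heD
  have hbrk : ∀ X Y : n, B e ⁅X, Y⁆ = 0 := fun X Y =>
    hrad _ (Submodule.subset_span ⟨X, Y, rfl⟩)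
  have hL2 := lorentz_psd B hsymm hLorentz hene hee
  -- every skew derivation preserves the line ℝe
  have hAe : ∀ A : n →ₗ[ℝ] n, IsSkewDeriv B A → ∃ c : ℝ, A e = c • e := by
    intro A hA
    have hAder : ∀ x ∈ derived n, A x ∈ derived n := by
      intro x hx
      induction hx using Submodule.span_induction with
      | mem z hz =>
        obtain ⟨X, Y, rfl⟩ := hz
        rw [hA.1]
        exact Submodule.add_mem _ (Submodule.subset_span ⟨_, _, rfl⟩)
          (Submodule.subset_span ⟨_, _, rfl⟩)
      | zero => simp
      | add a b _ _ pa pb => rw [map_add]; exact Submodule.add_mem _ pa pb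
      | smul c a _ pa => rw [map_smul]; exact Submodule.smul_mem _ _ pa
    have h1 : ∀ w ∈ derived n, B (A e) w = 0 := by
      intro w hw
      have h2 := hA.2 e w
      have h3 : B e (A w) = 0 := hrad _ (hAder w hw)
      linarith
    have h3 : B e (A e) = 0 := by rw [hsymm]; exact h1 e heD
    have h4 : B (A e) (A e) = 0 := h1 _ (hAder e heD)
    exact (hL2 (A e) h3).2 h4
  obtain ⟨N0, hN0⟩ := lcsS_eq_bot_of_nilpotent (m := n)
  -- e is central in e^⊥
  have hcent0 : ∀ Z : n, B e Z = 0 → ⁅Z, e⁆ = 0 := by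
    have hmemker : ∀ x : n, x ∈ LinearMap.ker (B e) ↔ B e x = 0 := fun x => LinearMap.mem_ker
    set C : Module.End ℝ n := -((LieAlgebra.ad ℝ n) e) with hCdef
    have hCapp : ∀ z : n, C z = ⁅z, e⁆ := by
      intro z
      rw [hCdef, LinearMap.neg_apply, LieAlgebra.ad_apply, ← lie_skew, neg_neg]
    have hq0 : ∀ z ∈ LinearMap.ker (B e), B ⁅z, e⁆ z = 0 := by
      intro z hz
      obtain ⟨A, k, hA, hGOz⟩ := hGO z
      obtain ⟨c, hc⟩ := hAe A hA
      have h4 := hGOz e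
      rw [map_add, LinearMap.add_apply] at h4
      have hz' : B e z = 0 := (hmemker z).1 hz
      have h5 : B z e = 0 := by rw [hsymm]; exact hz'
      have h6 : B (A e) z = 0 := by
        rw [hc, map_smul, LinearMap.smul_apply, smul_eq_mul, hz', mul_zero]
      rw [h5, mul_zero, h6] at h4
      linarith
    have hpol : ∀ a ∈ LinearMap.ker (B e), ∀ b ∈ LinearMap.ker (B e),
        B ⁅a, e⁆ b = - B a ⁅b, e⁆ := by
      intro a ha b hb
      have hab := hq0 (a + b) (Submodule.add_mem _ ha hb)
      have haa := hq0 a ha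
      have hbb := hq0 b hb
      rw [add_lie] at hab
      simp only [map_add, LinearMap.add_apply] at hab
      have h7 : B ⁅a,e⁆ b + B ⁅b,e⁆ a = 0 := by linarith
      have h8 : B a ⁅b,e⁆ = B ⁅b,e⁆ a := hsymm _ _
      linarith
    have hsn := skew_nilp B hsymm (LinearMap.ker (B e)) (Submodule.span ℝ {e}) C
      (fun z hz => by
        rw [hCapp, hmemker]
        exact hbrk z e)
      (fun a ha b hb => by rw [hCapp, hCapp]; exact hpol a ha b hb)
      (fun z hz hz0 => by
        obtain ⟨c, hc⟩ := (hL2 z ((hmemker z).1 hz)).2 hz0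
        exact Submodule.mem_span_singleton.2 ⟨c, hc.symm⟩)
      (fun v hv => by
        obtain ⟨c, hc⟩ := Submodule.mem_span_singleton.1 hv
        rw [hCapp, ← hc, smul_lie, lie_self, smul_zero])
      (fun v hv x hx => by
        obtain ⟨c, hc⟩ := Submodule.mem_span_singleton.1 hv
        rw [← hc, map_smul, LinearMap.smul_apply, smul_eq_mul, (hmemker x).1 hx, mul_zero])
      N0
      (fun z => by
        have hmem : ∀ k, (C^k) z ∈ lcsS n k → (C^(k+1)) z ∈ lcsS n (k+1) := by
          intro k hk
          have h12 : (C^(k+1)) z = C ((C^k) z) := by rw [pow_succ']; rfl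
          rw [h12, hCapp]
          exact lie_mem_lcsS' hk e
        have hall : ∀ k, (C^k) z ∈ lcsS n k := by
          intro k
          induction k with
          | zero => rw [lcsS_zero]; trivial
          | succ k ih => exact hmem k ih
        have h13 := hall N0
        rw [hN0] at h13
        simpa using h13)
    intro Z hZ
    have h7 : ⁅Z, e⁆ ∈ Submodule.span ℝ {e} := by
      rw [← hCapp]
      exact hsn Z ((hmemker Z).2 hZ)
    obtain ⟨c, hc⟩ := Submodule.mem_span_singleton.1 h7
    rcases eq_or_ne c 0 with rfl | hcne
    · rw [← hc, zero_smul]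
    · exfalso
      have hiter : ∀ k : ℕ, (((LieAlgebra.ad ℝ n) Z)^k) e = c^k • e := by
        intro k
        induction k with
        | zero => simp
        | succ k ih =>
          have h14 : (((LieAlgebra.ad ℝ n) Z)^(k+1)) e
              = ((LieAlgebra.ad ℝ n) Z) ((((LieAlgebra.ad ℝ n) Z)^k) e) := by
            rw [pow_succ']; rfl
          rw [h14, ih, map_smul, LieAlgebra.ad_apply, ← hc, smul_smul, ← pow_succ]
      have hmem2 : ∀ k, (((LieAlgebra.ad ℝ n) Z)^k) e ∈ lcsS n k := by
        intro k
        induction k with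
        | zero => rw [lcsS_zero]; trivial
        | succ k ih =>
          have h14 : (((LieAlgebra.ad ℝ n) Z)^(k+1)) e
              = ((LieAlgebra.ad ℝ n) Z) ((((LieAlgebra.ad ℝ n) Z)^k) e) := by
            rw [pow_succ']; rfl
          rw [h14, LieAlgebra.ad_apply]
          exact lie_mem_lcsS ih Z
      have h15 := hmem2 N0
      rw [hN0, hiter N0] at h15
      rw [Submodule.mem_bot, smul_eq_zero] at h15
      rcases h15 with h | h
      · exact pow_ne_zero N0 hcne h
      · exact hene h
  have hcent : ∀ Z : n, B e Z = 0 → ⁅e, Z⁆ = 0 := fun Z hZ => by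
    rw [← lie_skew, hcent0 Z hZ, neg_zero]
  -- construction of f
  have hv : ∃ v : n, B e v ≠ 0 := by
    by_contra h
    push_neg at h
    exact hene (hnondeg e h)
  obtain ⟨v, hv⟩ := hv
  have hexf : ∃ f : n, B e f = 1 ∧ B f f = 0 := by
    obtain ⟨u, heu⟩ : ∃ u : n, B e u = 1 :=
      ⟨(B e v)⁻¹ • v, by rw [map_smul, smul_eq_mul, inv_mul_cancel₀ hv]⟩
    have hue : B u e = 1 := by rw [hsymm]; exact heu
    refine ⟨u - ((B u u)/2) • e, ?_, ?_⟩
    · rw [map_sub, map_smul, heu, smul_eq_mul, hee]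
      ring
    · simp only [map_sub, map_smul, LinearMap.sub_apply, LinearMap.smul_apply, smul_eq_mul]
      rw [hue, heu, hee]
      ring
  obtain ⟨f, hef, hff⟩ := hexf
  have hfe : B f e = 1 := by rw [hsymm]; exact hef
  -- direct sum decomposition
  have hinf : Submodule.span ℝ {f} ⊓ LinearMap.ker (B e) = ⊥ := by
    rw [Submodule.eq_bot_iff]
    rintro x ⟨hx1, hx2⟩
    obtain ⟨c, hc⟩ := Submodule.mem_span_singleton.1 hx1
    have h1 : B e x = 0 := hx2
    rw [← hc, map_smul, smul_eq_mul, hef, mul_one] at h1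
    rw [← hc, h1, zero_smul]
  have hsup : Submodule.span ℝ {f} ⊔ LinearMap.ker (B e) = ⊤ := by
    rw [eq_top_iff]
    intro X _
    refine Submodule.mem_sup.2 ⟨(B e X) • f, Submodule.mem_span_singleton.2 ⟨B e X, rfl⟩,
      X - (B e X) • f, ?_, by abel⟩
    rw [LinearMap.mem_ker, map_sub, map_smul, smul_eq_mul, hef, mul_one, sub_self]
  -- positive definiteness on (ℝe + ℝf)^⊥
  have hPD : ∀ X : n, B e X = 0 → B f X = 0 → X ≠ 0 → 0 < B X X := by
    intro X h1 h2 h3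
    rcases hL2 X h1 with ⟨hge, hch⟩
    rcases lt_or_eq_of_le hge with h | h
    · exact h
    · exfalso
      obtain ⟨c, rfl⟩ := hch h.symm
      rw [map_smul, smul_eq_mul, hfe, mul_one] at h2
      rw [h2, zero_smul] at h3
      exact h3 rfl
  refine ⟨e, f, hene, heD, hee, hff, hef, hbrk, hcent, hinf, hsup, hPD, ?_⟩
  -- ### the quotient construction ###
  set W : Submodule ℝ n := LinearMap.ker (B e) ⊓ LinearMap.ker (B f) with hWdef
  have hWe : ∀ w : n, w ∈ W → B e w = 0 := fun w hw => (Submodule.mem_inf.1 hw).1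
  have hWf : ∀ w : n, w ∈ W → B f w = 0 := fun w hw => (Submodule.mem_inf.1 hw).2
  have hWmem : ∀ w : n, B e w = 0 → B f w = 0 → w ∈ W := fun w h1 h2 =>
    Submodule.mem_inf.2 ⟨h1, h2⟩
  set d := Module.finrank ℝ W with hd
  set bW : Module.Basis (Fin d) ℝ W := Module.finBasis ℝ W with hbW
  set φ : W ≃ₗ[ℝ] (Fin d → ℝ) := bW.equivFun with hφ
  set m₀ : Type := Fin d → ℝ with hm₀
  set prj : n →ₗ[ℝ] n :=
    LinearMap.id - LinearMap.smulRight (B f) e - LinearMap.smulRight (B e) f with hprj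
  have happ : ∀ X : n, prj X = X - (B f X) • e - (B e X) • f := by
    intro X
    rw [hprj]
    simp [LinearMap.sub_apply, LinearMap.smulRight_apply]
  have hprjW : ∀ X : n, prj X ∈ W := by
    intro X
    refine hWmem _ ?_ ?_
    · rw [happ, map_sub, map_sub, map_smul, map_smul, smul_eq_mul, smul_eq_mul, hee, hef]
      ring
    · rw [happ, map_sub, map_sub, map_smul, map_smul, smul_eq_mul, smul_eq_mul, hfe, hff]
      ring
  set pW : n →ₗ[ℝ] W := LinearMap.codRestrict W prj hprjW with hpW
  set π : n →ₗ[ℝ] m₀ := (φ : W →ₗ[ℝ] m₀) ∘ₗ pW with hπ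
  set ι : m₀ →ₗ[ℝ] n := W.subtype ∘ₗ (φ.symm : m₀ →ₗ[ℝ] W) with hι
  have hι_mem : ∀ a : m₀, ι a ∈ W := by
    intro a
    rw [hι]
    exact (φ.symm a).2
  have hιe : ∀ a : m₀, B e (ι a) = 0 := fun a => hWe _ (hι_mem a)
  have hιf : ∀ a : m₀, B f (ι a) = 0 := fun a => hWf _ (hι_mem a)
  have hpid : ∀ X : n, (ι (π X) : n) = prj X := by
    intro X
    rw [hι, hπ]
    simp only [LinearMap.comp_apply, LinearEquiv.coe_coe]
    rw [LinearEquiv.symm_apply_apply]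
    rfl
  have hlift : ∀ X : n, B e X = 0 → (ι (π X) : n) = X - (B f X) • e := by
    intro X hX
    rw [hpid, happ, hX, zero_smul, sub_zero]
  have hπι : ∀ a : m₀, π (ι a) = a := by
    intro a
    have h1 : prj (ι a) = ι a := by
      rw [happ, hιe a, hιf a, zero_smul, zero_smul, sub_zero, sub_zero]
    have h2 : pW (ι a) = φ.symm a := by
      apply Subtype.ext
      show prj (ι a) = _
      rw [h1, hι]
      rfl
    rw [hπ]
    simp only [LinearMap.comp_apply, LinearEquiv.coe_coe]
    rw [h2, LinearEquiv.apply_symm_apply]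
  have hπe : π e = 0 := by
    have h1 : prj e = 0 := by
      rw [happ, hfe, hee, one_smul, zero_smul, sub_zero, sub_self]
    have h2 : pW e = 0 := by
      apply Subtype.ext
      show prj e = _
      rw [h1]
      rfl
    rw [hπ]
    simp only [LinearMap.comp_apply, LinearEquiv.coe_coe]
    rw [h2, map_zero]
  -- bracket computations for well-definedness
  have hbrL : ∀ (a : m₀) (Z : n), B e Z = 0 → ⁅(ι a : n), (ι (π Z) : n)⁆ = ⁅(ι a : n), Z⁆ := by
    intro a Z hZ
    rw [hlift Z hZ, lie_sub, lie_smul, hcent0 (ι a) (hιe a), smul_zero, sub_zero]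
  have hbrR : ∀ (a : m₀) (Z : n), B e Z = 0 → ⁅(ι (π Z) : n), (ι a : n)⁆ = ⁅Z, (ι a : n)⁆ := by
    intro a Z hZ
    rw [hlift Z hZ, sub_lie, smul_lie, hcent (ι a) (hιe a), smul_zero, sub_zero]
  have hbrR2 : ∀ (Z Y' : n), B e Z = 0 → B e Y' = 0 → ⁅(ι (π Z) : n), Y'⁆ = ⁅Z, Y'⁆ := by
    intro Z Y' hZ hY'
    rw [hlift Z hZ, sub_lie, smul_lie, hcent Y' hY', smul_zero, sub_zero]
  -- Lie ring structure on m₀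
  letI instLR : LieRing m₀ :=
    { (inferInstance : AddCommGroup m₀) with
      bracket := fun a b => π ⁅(ι a : n), (ι b : n)⁆
      add_lie := by
        intro a b c
        show π ⁅(ι (a+b) : n), (ι c : n)⁆ = π ⁅(ι a : n), _⁆ + π ⁅(ι b : n), _⁆
        rw [map_add, add_lie, map_add]
      lie_add := by
        intro a b c
        show π ⁅(ι a : n), (ι (b+c) : n)⁆ = π ⁅_, (ι b : n)⁆ + π ⁅_, (ι c : n)⁆
        rw [map_add, lie_add, map_add]
      lie_self := by
        intro a
        show π ⁅(ι a : n), (ι a : n)⁆ = 0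
        rw [lie_self, map_zero]
      leibniz_lie := by
        intro a b c
        show π ⁅(ι a : n), (ι (π ⁅(ι b : n), (ι c : n)⁆) : n)⁆
          = π ⁅(ι (π ⁅(ι a : n), (ι b : n)⁆) : n), (ι c : n)⁆
            + π ⁅(ι b : n), (ι (π ⁅(ι a : n), (ι c : n)⁆) : n)⁆
        rw [hbrL a _ (hbrk _ _), hbrR c _ (hbrk _ _), hbrL b _ (hbrk _ _)]
        rw [leibniz_lie (ι a : n) (ι b : n) (ι c : n), map_add] }
  letI instLA : LieAlgebra ℝ m₀ :=
    { (inferInstance : Module ℝ m₀) with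
      lie_smul := by
        intro c a b
        show π ⁅(ι a : n), (ι (c • b) : n)⁆ = c • π ⁅(ι a : n), (ι b : n)⁆
        rw [map_smul, lie_smul, map_smul] }
  have hbrdef : ∀ a b : m₀, ⁅a, b⁆ = π ⁅(ι a : n), (ι b : n)⁆ := fun a b => rfl
  set B₀ : LinearMap.BilinForm ℝ m₀ := B.compl₁₂ ι ι with hB₀
  have hB₀app : ∀ a b : m₀, B₀ a b = B (ι a) (ι b) := by
    intro a b
    rw [hB₀]
    rfl
  -- B₀ compatibility with π on the kernel
  have hcompat : ∀ X Y : n, B e X = 0 → B e Y = 0 → B₀ (π X) (π Y) = B X Y := by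
    intro X Y hX hY
    rw [hB₀app, hlift X hX, hlift Y hY]
    simp only [map_sub, map_smul, LinearMap.sub_apply, LinearMap.smul_apply, smul_eq_mul]
    have h1 : B X e = 0 := by rw [hsymm]; exact hX
    rw [h1, hY, hee]
    ring
  -- hom property
  have hhom : ∀ X Y : n, B e X = 0 → B e Y = 0 → π ⁅X, Y⁆ = ⁅π X, π Y⁆ := by
    intro X Y hX hY
    rw [hbrdef, hbrL (π X) Y hY, hbrR2 X Y hX hY]
  -- surjectivity from the kernel
  have hmap : (LinearMap.ker (B e)).map π = ⊤ := by
    rw [eq_top_iff]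
    intro a _
    exact Submodule.mem_map.2 ⟨ι a, LinearMap.mem_ker.2 (hιe a), hπι a⟩
  -- kernel characterization
  have hkerchar : ∀ X : n, B e X = 0 → (π X = 0 ↔ ∃ c : ℝ, X = c • e) := by
    intro X hX
    constructor
    · intro h
      refine ⟨B f X, ?_⟩
      have h1 := hlift X hX
      rw [h] at h1
      rw [map_zero] at h1
      exact (sub_eq_zero.1 h1.symm)
    · rintro ⟨c, rfl⟩
      rw [map_smul, hπe, smul_zero]
  -- symmetry and positive definiteness of B₀
  have hsymm₀ : ∀ x y : m₀, B₀ x y = B₀ y x := fun x y => by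
    rw [hB₀app, hB₀app, hsymm]
  have hι_inj : ∀ x : m₀, ι x = 0 → x = 0 := by
    intro x hx
    have h1 : π (ι x) = 0 := by rw [hx, map_zero]
    rw [hπι x] at h1
    exact h1
  have hpd₀ : ∀ x : m₀, x ≠ 0 → 0 < B₀ x x := by
    intro x hx
    rw [hB₀app]
    exact hPD (ι x) (hιe x) (hιf x) (fun h => hx (hι_inj x h))
  -- skew derivations map the kernel of B e to itself
  have hAker : ∀ (A : n →ₗ[ℝ] n), IsSkewDeriv B A → ∀ X : n, B e X = 0 → B e (A X) = 0 := by
    intro A hA X hX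
    obtain ⟨c, hc⟩ := hAe A hA
    have h1 := hA.2 X e
    have h2 : B X (A e) = 0 := by
      rw [hc, map_smul, smul_eq_mul, hsymm X e, hX, mul_zero]
    rw [hsymm]
    linarith
  -- the GO property descends to the quotient
  have hGO₀ : IsGO B₀ := by
    intro x
    obtain ⟨A, k, hA, hGOT⟩ := hGO (ι x)
    obtain ⟨c₀, hc₀⟩ := hAe A hA
    refine ⟨π ∘ₗ A ∘ₗ ι, k, ⟨?_, ?_⟩, ?_⟩
    · -- derivation property
      intro a b
      simp only [LinearMap.comp_apply]
      rw [hbrdef a b]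
      have hZ : B e ⁅(ι a : n), (ι b : n)⁆ = 0 := hbrk _ _
      rw [hlift _ hZ, map_sub, map_smul, hc₀, map_sub, map_smul, map_smul, hπe, smul_zero,
        smul_zero, sub_zero]
      rw [hA.1 (ι a) (ι b), map_add]
      rw [hbrdef (π (A (ι a))) b, hbrdef a (π (A (ι b)))]
      rw [hbrR b _ (hAker A hA _ (hιe a)), hbrL a _ (hAker A hA _ (hιe b))]
    · -- skew-symmetry
      intro a b
      simp only [LinearMap.comp_apply]
      have h1 := hcompat (A (ι a)) (ι b) (hAker A hA _ (hιe a)) (hιe b)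
      rw [hπι b] at h1
      have h2 := hcompat (ι a) (A (ι b)) (hιe a) (hAker A hA _ (hιe b))
      rw [hπι a] at h2
      rw [h1, h2]
      exact hA.2 (ι a) (ι b)
    · -- the GO equation
      intro x'
      have hS1 : B e ⁅(ι x : n), (ι x' : n)⁆ = 0 := hbrk _ _
      have hS2 : B e (A (ι x')) = 0 := hAker A hA _ (hιe x')
      have hbr1 : ⁅x, x'⁆ = π ⁅(ι x : n), (ι x' : n)⁆ := hbrdef x x'
      simp only [LinearMap.comp_apply]
      rw [hbr1, ← map_add]
      have h3 := hcompat (⁅(ι x : n), (ι x' : n)⁆ + A (ι x')) (ι x)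
        (by rw [map_add, hS1, hS2, add_zero]) (hιe x)
      rw [hπι x] at h3
      rw [h3, hGOT (ι x')]
      rw [hB₀app]
  -- nilpotency of the quotient
  have hker1 : ∀ Y ∈ lcsS n 1, B e Y = 0 := by
    have h1 : lcsS n 1 ≤ LinearMap.ker (B e) := by
      rw [lcsS_succ]
      refine Submodule.span_le.2 ?_
      rintro z ⟨x, y, _, rfl⟩
      exact LinearMap.mem_ker.2 (hbrk x y)
    exact fun Y hY => LinearMap.mem_ker.1 (h1 hY)
  have hΓ : ∀ k, lcsS m₀ (k+1) ≤ Submodule.map π (lcsS n (k+1)) := by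
    intro k
    induction k with
    | zero =>
      rw [lcsS_succ]
      refine Submodule.span_le.2 ?_
      rintro z ⟨x, y, _, rfl⟩
      exact Submodule.mem_map.2 ⟨⁅(ι x : n), (ι y : n)⁆,
        lie_mem_lcsS (by rw [lcsS_zero]; trivial) _, (hbrdef x y).symm⟩
    | succ k ih =>
      rw [lcsS_succ]
      refine Submodule.span_le.2 ?_
      rintro z ⟨x, y, hy, rfl⟩
      obtain ⟨Y, hY, rfl⟩ := Submodule.mem_map.1 (ih hy)
      have hYe : B e Y = 0 := hker1 Y (lcsS_le_of_le (by omega : 1 ≤ k+1) hY)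
      have h1 : ⁅x, π Y⁆ = π ⁅(ι x : n), Y⁆ := by
        conv_lhs => rw [← hπι x]
        rw [hhom _ _ (hιe x) hYe]
      exact Submodule.mem_map.2 ⟨⁅(ι x : n), Y⁆, lie_mem_lcsS hY _, h1.symm⟩
  have hnil₀ : ∃ N, lcsS m₀ N = ⊥ := by
    refine ⟨N0 + 1, le_bot_iff.1 ?_⟩
    refine (hΓ N0).trans ?_
    have h2 : lcsS n (N0+1) ≤ lcsS n N0 := lcsS_succ_le N0
    refine (Submodule.map_mono h2).trans ?_
    rw [hN0, Submodule.map_bot]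
  exact ⟨m₀, instLR, instLA, inferInstance, B₀, π, hsymm₀, hpd₀, hhom, hcompat, hmap, hkerchar,
    hGO₀, gordon B₀ hsymm₀ hpd₀ hGO₀ hnil₀⟩
end

section
/- Let (𝔫, ⟨·,·⟩) be the metric Lie algebra of the double extension construction (for any admissible d and S), and let 𝔥 be the Lie algebra (under commutator) of all skew-symmetric derivations of (𝔫, ⟨·,·⟩), acting on 𝔫 in the natural way. Then 𝔫 is not a semisimple 𝔥-module: 𝔫 cannot be written as a direct sum of simple (irreducible) 𝔥-submodules; equivalently, some 𝔥-invariant subspace of 𝔫 admits no 𝔥-invariant complement. -/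
open Matrix

/-- The block matrix `P = [[0, -Sᵀ],[S, Sᵀ - S]]`. -/
def Pmat {s : ℕ} (S : Matrix (Fin s) (Fin s) ℝ) :
    Matrix (Fin s ⊕ Fin s) (Fin s ⊕ Fin s) ℝ :=
  Matrix.fromBlocks 0 (-Sᵀ) S (Sᵀ - S)

/-- The block matrix `Q = [[0, Sᵀ],[S, Sᵀ - S]]`. -/
def Qmat {s : ℕ} (S : Matrix (Fin s) (Fin s) ℝ) :
    Matrix (Fin s ⊕ Fin s) (Fin s ⊕ Fin s) ℝ :=
  Matrix.fromBlocks 0 Sᵀ S (Sᵀ - S)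

/-- The underlying vector space `𝔫 = ℝf ⊕ ℝ^{2s} ⊕ ℝe`; the element `(α, X, η)` represents
`αf + X + ηe`. -/
abbrev DE (s : ℕ) : Type := ℝ × ((Fin s ⊕ Fin s) → ℝ) × ℝ

/-- The Lie bracket `[αf + X + ηe, βf + Y + ρe] = αQY − βQX + ⟨PX, Y⟩₀ e` of the double
extension construction. -/
def bkDE {s : ℕ} (S : Matrix (Fin s) (Fin s) ℝ) (a b : DE s) : DE s :=
  (0, a.1 • (Qmat S).mulVec b.2.1 - b.1 • (Qmat S).mulVec a.2.1,
    (Pmat S).mulVec a.2.1 ⬝ᵥ b.2.1)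

/-- The inner product `⟨αf + X + ηe, βf + Y + ρe⟩ = ⟨X,Y⟩₀ + αρ + βη` of the double extension
construction. -/
def formDE {s : ℕ} (a b : DE s) : ℝ :=
  a.2.1 ⬝ᵥ b.2.1 + a.1 * b.2.2 + b.1 * a.2.2

/-- `D` is a skew-symmetric derivation of the double extension `(𝔫, ⟨·,·⟩)`: a linear map that
is a derivation of the bracket and skew-symmetric with respect to the form. -/
def IsSkewDerivDE {s : ℕ} (S : Matrix (Fin s) (Fin s) ℝ) (D : DE s → DE s) : Prop :=
  IsLinearMap ℝ D ∧
  (∀ a b : DE s, D (bkDE S a b) = bkDE S (D a) b + bkDE S a (D b)) ∧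
  (∀ a b : DE s, formDE (D a) b + formDE a (D b) = 0)

/-!
Every skew-symmetric derivation `D` preserves the line `ℝe`. Skew-symmetry kills the
`f`-component of `D e`; `[f, e] = 0` gives `Q n = 0` for its `ℝ^{2s}`-component `n`, hence
`P n = 0` and `[X, n] = 0` for all `X`. Applying `D` to this bracket yields `⟨n, n⟩₀ Q X = 0`,
and `Q ≠ 0` since `S ≠ 0`, so `n = 0`.

On the other hand, for `u = (0, 1)` the map `f ↦ u, X ↦ -⟨u, X⟩₀ e, e ↦ 0` is a skew-symmetric
derivation whose square sends `f + X + ηe` to `-⟨u, u⟩₀ e ≠ 0`. An invariant complement of `ℝe`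
contains a vector `f + X + ηe`, hence meets `ℝe`.
-/

section Matrices

variable {s : ℕ} (S : Matrix (Fin s) (Fin s) ℝ)

lemma Pmat_transpose : (Pmat S)ᵀ = -Pmat S := by
  ext (k | k) (l | l) <;> simp [Pmat]

lemma Qmat_eq_zero_iff : Qmat S = 0 ↔ S = 0 := by
  rw [Qmat, ← fromBlocks_zero, fromBlocks_inj]
  constructor
  · exact fun h => h.2.2.1
  · rintro rfl
    simp

lemma Pmat_mulVec_eq_zero_of_Qmat_mulVec_eq_zero {v : Fin s ⊕ Fin s → ℝ}
    (hv : Qmat S *ᵥ v = 0) : Pmat S *ᵥ v = 0 := by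
  have hv' := congrFun hv
  rw [Qmat, fromBlocks_mulVec] at hv'
  rw [Pmat, fromBlocks_mulVec]
  ext (k | k)
  · simpa [neg_mulVec] using hv' (Sum.inl k)
  · simpa using hv' (Sum.inr k)

lemma Pmat_mulVec_inr (w : Fin s → ℝ) :
    Pmat S *ᵥ Sum.elim 0 w = -((Qmat S)ᵀ *ᵥ Sum.elim 0 w) := by
  rw [Pmat, Qmat, fromBlocks_transpose, fromBlocks_mulVec, fromBlocks_mulVec]
  ext (k | k) <;> simp [sub_mulVec, neg_mulVec]

end Matrices

section Derivations

variable {s : ℕ} (S : Matrix (Fin s) (Fin s) ℝ)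

def skewDerivOf (u : Fin s ⊕ Fin s → ℝ) (a : DE s) : DE s :=
  (0, a.1 • u, -(u ⬝ᵥ a.2.1))

lemma isLinearMap_skewDerivOf (u : Fin s ⊕ Fin s → ℝ) : IsLinearMap ℝ (skewDerivOf u) where
  map_add a b := by
    simp only [skewDerivOf, Prod.fst_add, Prod.snd_add, add_smul, dotProduct_add, Prod.mk_add_mk,
      add_zero, neg_add]
  map_smul c a := by
    simp [skewDerivOf, smul_smul, dotProduct_smul]

lemma isSkewDerivDE_skewDerivOf {u : Fin s ⊕ Fin s → ℝ}
    (hu : Pmat S *ᵥ u = -((Qmat S)ᵀ *ᵥ u)) : IsSkewDerivDE S (skewDerivOf u) := by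
  have hPu (Y : Fin s ⊕ Fin s → ℝ) : Pmat S *ᵥ u ⬝ᵥ Y = -(u ⬝ᵥ Qmat S *ᵥ Y) := by
    rw [hu, neg_dotProduct, mulVec_transpose, dotProduct_mulVec]
  have hPX (X : Fin s ⊕ Fin s → ℝ) : Pmat S *ᵥ X ⬝ᵥ u = u ⬝ᵥ Qmat S *ᵥ X := by
    rw [dotProduct_comm, dotProduct_mulVec, ← mulVec_transpose, Pmat_transpose, neg_mulVec, hu,
      neg_neg, mulVec_transpose, dotProduct_mulVec]
  refine ⟨isLinearMap_skewDerivOf u, fun a b => ?_, fun a b => ?_⟩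
  · simp only [skewDerivOf, bkDE, Prod.ext_iff, Prod.fst_add, Prod.snd_add]
    refine ⟨by simp, by simp [mulVec_smul, smul_smul, mul_comm], ?_⟩
    simp only [mulVec_smul, smul_dotProduct, dotProduct_smul, hPu, hPX, dotProduct_sub,
      smul_eq_mul]
    ring
  · simp [formDE, skewDerivOf, dotProduct_smul, smul_dotProduct, dotProduct_comm u]

lemma skewDerivOf_skewDerivOf (u : Fin s ⊕ Fin s → ℝ) (a : DE s) :
    skewDerivOf u (skewDerivOf u a) = (0, 0, -(a.1 * (u ⬝ᵥ u))) := by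
  simp [skewDerivOf, dotProduct_smul]

end Derivations

def fDE (s : ℕ) : DE s := (1, 0, 0)

def eDE (s : ℕ) : DE s := (0, 0, 1)

def IsSkewDerivInvariant {s : ℕ} (S : Matrix (Fin s) (Fin s) ℝ) (W : Submodule ℝ (DE s)) : Prop :=
  ∀ D : DE s → DE s, IsSkewDerivDE S D → ∀ x ∈ W, D x ∈ W

lemma formDE_eDE {s : ℕ} (a : DE s) : formDE a (eDE s) = a.1 := by
  simp [formDE, eDE]

lemma eDE_formDE {s : ℕ} (b : DE s) : formDE (eDE s) b = b.1 := by
  simp [formDE, eDE]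

namespace IsSkewDerivDE

variable {s : ℕ} {S : Matrix (Fin s) (Fin s) ℝ} {D : DE s → DE s}

lemma fst_map_eDE (hD : IsSkewDerivDE S D) : (D (eDE s)).1 = 0 := by
  have h := hD.2.2 (eDE s) (eDE s)
  rw [formDE_eDE, eDE_formDE] at h
  linarith

lemma fst_map_vec (hD : IsSkewDerivDE S D) (X : Fin s ⊕ Fin s → ℝ) :
    (D (0, X, 0)).1 = -(X ⬝ᵥ (D (eDE s)).2.1) := by
  have h := hD.2.2 (0, X, 0) (eDE s)
  rw [formDE_eDE] at h
  simp only [formDE, zero_mul, mul_zero, add_zero] at h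
  linarith

lemma Qmat_mulVec_map_eDE (hD : IsSkewDerivDE S D) : Qmat S *ᵥ (D (eDE s)).2.1 = 0 := by
  have hfe : bkDE S (fDE s) (eDE s) = 0 := by simp [bkDE, fDE, eDE]
  have h := congrArg (·.2.1) (hD.2.1 (fDE s) (eDE s))
  rw [hfe, hD.1.map_zero] at h
  simpa [bkDE, fDE, eDE] using h.symm

lemma map_eDE_snd_fst (hD : IsSkewDerivDE S D) (hS : S ≠ 0) : (D (eDE s)).2.1 = 0 := by
  set n := (D (eDE s)).2.1
  have hQ : Qmat S *ᵥ n = 0 := hD.Qmat_mulVec_map_eDE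
  have hP : Pmat S *ᵥ n = 0 := Pmat_mulVec_eq_zero_of_Qmat_mulVec_eq_zero S hQ
  have hDn : (D (0, n, 0)).1 = -(n ⬝ᵥ n) := hD.fst_map_vec n
  have hsmul (X : Fin s ⊕ Fin s → ℝ) : (n ⬝ᵥ n) • Qmat S *ᵥ X = 0 := by
    have hXn : bkDE S (0, X, 0) (0, n, 0) = 0 := by
      rw [bkDE, dotProduct_comm, dotProduct_mulVec, ← mulVec_transpose, Pmat_transpose,
        neg_mulVec, hP]
      simp
    have h := congrArg (·.2.1) (hD.2.1 (0, X, 0) (0, n, 0))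
    rw [hXn, hD.1.map_zero] at h
    simpa [bkDE, hQ, hDn] using h.symm
  by_contra hn
  have hnn : n ⬝ᵥ n ≠ 0 := fun h => hn (dotProduct_self_eq_zero.1 h)
  refine hS ((Qmat_eq_zero_iff S).1 (ext_of_mulVec_single fun j => ?_))
  rw [zero_mulVec]
  exact (smul_eq_zero.1 (hsmul _)).resolve_left hnn

lemma map_eDE (hD : IsSkewDerivDE S D) (hS : S ≠ 0) : D (eDE s) = (0, 0, (D (eDE s)).2.2) :=
  Prod.ext hD.fst_map_eDE (Prod.ext (hD.map_eDE_snd_fst hS) rfl)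

end IsSkewDerivDE

section Semisimplicity

variable {s : ℕ} {S : Matrix (Fin s) (Fin s) ℝ}

lemma isSkewDerivInvariant_span_eDE (hS : S ≠ 0) :
    IsSkewDerivInvariant S (Submodule.span ℝ {eDE s}) := by
  intro D hD x hx
  obtain ⟨c, rfl⟩ := Submodule.mem_span_singleton.1 hx
  rw [hD.1.map_smul, hD.map_eDE hS]
  refine Submodule.smul_mem _ c (Submodule.mem_span_singleton.2 ⟨(D (eDE s)).2.2, ?_⟩)
  simp [eDE]

lemma span_eDE_inf_ne_bot {u : Fin s ⊕ Fin s → ℝ} (hu : Pmat S *ᵥ u = -((Qmat S)ᵀ *ᵥ u))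
    (hu0 : u ≠ 0) {W : Submodule ℝ (DE s)} (hW : IsSkewDerivInvariant S W)
    (hsup : Submodule.span ℝ {eDE s} ⊔ W = ⊤) : Submodule.span ℝ {eDE s} ⊓ W ≠ ⊥ := by
  obtain ⟨y, hy, z, hz, hyz⟩ := Submodule.mem_sup.1 (hsup ▸ Submodule.mem_top : fDE s ∈ _)
  have hz1 : z.1 = 1 := by
    obtain ⟨c, rfl⟩ := Submodule.mem_span_singleton.1 hy
    simpa [eDE, fDE] using congrArg Prod.fst hyz
  have hD := isSkewDerivDE_skewDerivOf S hu
  have hmem : skewDerivOf u (skewDerivOf u z) ∈ Submodule.span ℝ {eDE s} ⊓ W := by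
    refine ⟨Submodule.mem_span_singleton.2 ⟨-(z.1 * (u ⬝ᵥ u)), ?_⟩, hW _ hD _ (hW _ hD _ hz)⟩
    simp [skewDerivOf_skewDerivOf, eDE]
  intro hbot
  rw [hbot, Submodule.mem_bot, skewDerivOf_skewDerivOf, hz1] at hmem
  have huu := congrArg (·.2.2) hmem
  simp only [one_mul, neg_eq_zero, Prod.snd_zero] at huu
  exact hu0 (dotProduct_self_eq_zero.1 huu)

end Semisimplicity

theorem stmt6_general (d s : ℕ) (hd : 1 < d)
    (S : Matrix (Fin s) (Fin s) ℝ) (hSd1 : S ^ (d - 1) ≠ 0) :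
    ∃ W : Submodule ℝ (DE s),
      (∀ D : DE s → DE s, IsSkewDerivDE S D → ∀ x ∈ W, D x ∈ W) ∧
      ¬ ∃ W' : Submodule ℝ (DE s),
          (∀ D : DE s → DE s, IsSkewDerivDE S D → ∀ x ∈ W', D x ∈ W') ∧
          W ⊓ W' = ⊥ ∧ W ⊔ W' = ⊤ := by
  have hS : S ≠ 0 := by
    rintro rfl
    exact hSd1 (zero_pow (by omega))
  obtain ⟨i, -, -⟩ : ∃ i j, S i j ≠ 0 := by
    by_contra! h
    exact hS (Matrix.ext h)
  have hu0 : (Sum.elim 0 1 : Fin s ⊕ Fin s → ℝ) ≠ 0 := fun h =>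
    one_ne_zero (congrFun h (Sum.inr i))
  refine ⟨_, isSkewDerivInvariant_span_eDE hS, fun ⟨W', hW', hinf, hsup⟩ => ?_⟩
  exact span_eDE_inf_ne_bot (Pmat_mulVec_inr S 1) hu0 hW' hsup hinf

/-- the double extension `𝔫` is not a semisimple module over the Lie algebra `𝔥`
of all its skew-symmetric derivations: some `𝔥`-invariant subspace admits no `𝔥`-invariant
complement. -/
theorem stmt6 (d s : ℕ) (hd : 1 < d) (hs : 1 ≤ s)
    (S : Matrix (Fin s) (Fin s) ℝ) (hSd : S ^ d = 0) (hSd1 : S ^ (d - 1) ≠ 0) :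
    ∃ W : Submodule ℝ (DE s),
      (∀ D : DE s → DE s, IsSkewDerivDE S D → ∀ x ∈ W, D x ∈ W) ∧
      ¬ ∃ W' : Submodule ℝ (DE s),
          (∀ D : DE s → DE s, IsSkewDerivDE S D → ∀ x ∈ W', D x ∈ W') ∧
          W ⊓ W' = ⊥ ∧ W ⊔ W' = ⊤ :=
  stmt6_general d s hd S hSd1
end

section
/- Let (𝔫, ⟨·,·⟩) be a metric Lie algebra with 𝔫 nilpotent, satisfying the GO condition, and suppose the restriction of ⟨·,·⟩ to the derived algebra [𝔫,𝔫] is nondegenerate. Then ⟨[T,X], X⟩ = 0 for all T ∈ 𝔫 and all X ∈ [𝔫,𝔫]. -/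
namespace Stmt7Aux

variable {n : Type*} [LieRing n] [LieAlgebra ℝ n]

lemma bracket_mem_derived (x y : n) : ⁅x, y⁆ ∈ derived n :=
  Submodule.subset_span ⟨x, y, rfl⟩

/-- A derivation maps the derived algebra into itself. -/
lemma deriv_mem_derived {D : n →ₗ[ℝ] n}
    (hD : ∀ X Y : n, D ⁅X, Y⁆ = ⁅D X, Y⁆ + ⁅X, D Y⁆) {x : n} (hx : x ∈ derived n) :
    D x ∈ derived n := by
  induction hx using Submodule.span_induction with
  | mem z hz =>
      obtain ⟨X, Y, rfl⟩ := hz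
      rw [hD]
      exact add_mem (bracket_mem_derived _ _) (bracket_mem_derived _ _)
  | zero => simp
  | add x y hx hy ihx ihy => rw [map_add]; exact add_mem ihx ihy
  | smul c x hx ih => rw [map_smul]; exact Submodule.smul_mem _ _ ih

/-- Vanishing of a linear functional on the derived algebra, given vanishing on brackets. -/
lemma vanish_on_derived {f : n →ₗ[ℝ] ℝ} (h : ∀ t c : n, f ⁅t, c⁆ = 0)
    {W : n} (hW : W ∈ derived n) : f W = 0 := by
  induction hW using Submodule.span_induction with
  | mem z hz => obtain ⟨X, Y, rfl⟩ := hz; exact h X Y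
  | zero => exact map_zero f
  | add x y hx hy ihx ihy => rw [map_add, ihx, ihy, add_zero]
  | smul c x hx ih => rw [map_smul, ih, smul_zero]

local notation "lcs" => LieModule.lowerCentralSeries ℝ n n

lemma lcs_one_eq : lcs 1 = ⁅(⊤ : LieIdeal ℝ n), (⊤ : LieSubmodule ℝ n n)⁆ := by
  rw [LieModule.lowerCentralSeries_succ, LieModule.lowerCentralSeries_zero]

lemma mem_lcs_succ_right {i : ℕ} (t : n) {x : n} (hx : x ∈ lcs i) : ⁅t, x⁆ ∈ lcs (i + 1) := by
  rw [LieModule.lowerCentralSeries_succ]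
  exact LieSubmodule.lie_mem_lie (LieSubmodule.mem_top t) hx

lemma mem_lcs_succ_left {i : ℕ} {x : n} (hx : x ∈ lcs i) (t : n) : ⁅x, t⁆ ∈ lcs (i + 1) := by
  rw [← lie_skew]
  exact neg_mem (mem_lcs_succ_right t hx)

lemma lcs_le_derived {i : ℕ} (hi : 1 ≤ i) {x : n} (hx : x ∈ lcs i) : x ∈ derived n := by
  have h1 : x ∈ lcs 1 := LieModule.antitone_lowerCentralSeries ℝ n n hi hx
  rw [lcs_one_eq] at h1
  rw [← LieSubmodule.mem_toSubmodule, LieSubmodule.lieIdeal_oper_eq_linear_span'] at h1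
  refine Submodule.span_le.mpr ?_ h1
  rintro z ⟨a, -, b, -, rfl⟩
  exact bracket_mem_derived a b

lemma derived_le_lcs_one {x : n} (hx : x ∈ derived n) : x ∈ lcs 1 := by
  rw [← LieSubmodule.mem_toSubmodule]
  refine Submodule.span_le.mpr ?_ hx
  rintro z ⟨X, Y, rfl⟩
  simp only [SetLike.mem_coe, LieSubmodule.mem_toSubmodule, lcs_one_eq]
  exact LieSubmodule.lie_mem_lie (LieSubmodule.mem_top X) (LieSubmodule.mem_top Y)

variable (B : LinearMap.BilinForm ℝ n)

/-- From GO: for `T` in the derived algebra, the functional `w ↦ B ⁅T,w⁆ T`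
is represented by a vector of the derived algebra. -/
lemma exq (hsymm : ∀ X Y : n, B X Y = B Y X) (hGO : IsGO B)
    {T : n} (hT : T ∈ derived n) :
    ∃ u ∈ derived n, ∀ w, B ⁅T, w⁆ T = B u w := by
  obtain ⟨A, k, ⟨hAder, hAskew⟩, hrel⟩ := hGO T
  refine ⟨k • T + A T,
    add_mem (Submodule.smul_mem _ _ hT) (deriv_mem_derived hAder hT), fun w => ?_⟩
  have h1 := hrel w
  rw [map_add, LinearMap.add_apply] at h1
  have h2 := hAskew w T
  have h3 : B (A T) w = B w (A T) := hsymm _ _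
  have h4 : B T w = B w T := hsymm _ _
  rw [map_add, LinearMap.add_apply, map_smul, LinearMap.smul_apply, smul_eq_mul]
  linarith

/-- Polarized version: the functional `w ↦ B ⁅Y,w⁆ Z + B ⁅Z,w⁆ Y` is represented
by a vector of the derived algebra. -/
lemma psi_rep (hsymm : ∀ X Y : n, B X Y = B Y X) (hGO : IsGO B)
    {Y Z : n} (hY : Y ∈ derived n) (hZ : Z ∈ derived n) :
    ∃ u ∈ derived n, ∀ w, B ⁅Y, w⁆ Z + B ⁅Z, w⁆ Y = B u w := by
  obtain ⟨u1, hu1, h1⟩ := exq B hsymm hGO (add_mem hY hZ)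
  obtain ⟨u2, hu2, h2⟩ := exq B hsymm hGO hY
  obtain ⟨u3, hu3, h3⟩ := exq B hsymm hGO hZ
  refine ⟨u1 - u2 - u3, sub_mem (sub_mem hu1 hu2) hu3, fun w => ?_⟩
  have e1 := h1 w
  have e2 := h2 w
  have e3 := h3 w
  rw [add_lie] at e1
  simp only [map_add, LinearMap.add_apply] at e1
  simp only [map_sub, LinearMap.sub_apply]
  linarith

/-- If the diagonal functionals vanish on level `j`, the polarized ones do as well. -/
lemma psi_zero_of_pair {j : ℕ}
    (hM : ∀ U ∈ lcs j, ∀ w : n, B ⁅U, w⁆ U = 0)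
    {P Z : n} (hP : P ∈ lcs j) (hZ : Z ∈ lcs j) (w : n) :
    B ⁅P, w⁆ Z + B ⁅Z, w⁆ P = 0 := by
  have h1 := hM (P + Z) (add_mem hP hZ) w
  have h2 := hM P hP w
  have h3 := hM Z hZ w
  rw [add_lie] at h1
  simp only [map_add, LinearMap.add_apply] at h1
  linarith


/-- Downward induction: polarized functionals vanish at deep levels. -/
lemma Rall (hsymm : ∀ X Y : n, B X Y = B Y X) (hGO : IsGO B)
    (hnd' : ∀ X ∈ derived n, (∀ Y ∈ derived n, B X Y = 0) → X = 0)
    {i : ℕ} (hi : 1 ≤ i)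
    (hM1 : ∀ U ∈ lcs (i + 1), ∀ w : n, B ⁅U, w⁆ U = 0) :
    ∀ s r, i + 1 ≤ r → lcs (r + s) = ⊥ →
      ∀ Y ∈ lcs i, ∀ Z ∈ lcs r, ∀ w : n, B ⁅Y, w⁆ Z + B ⁅Z, w⁆ Y = 0 := by
  intro s
  induction s with
  | zero =>
      intro r _ hbot Y _ Z hZ w
      rw [Nat.add_zero] at hbot
      rw [hbot] at hZ
      have hZ0 : Z = 0 := (LieSubmodule.mem_bot _).mp hZ
      subst hZ0
      simp
  | succ s ih =>
      intro r hr hbot Y hY Z hZ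
      have hbot' : lcs (r + 1 + s) = ⊥ := by
        rw [show r + 1 + s = r + (s + 1) by omega]; exact hbot
      have hR1 := ih (r + 1) (by omega) hbot'
      have hZ' : Z ∈ lcs (i + 1) := LieModule.antitone_lowerCentralSeries ℝ n n hr hZ
      have hstep1 : ∀ W ∈ derived n, B ⁅Y, W⁆ Z + B ⁅Z, W⁆ Y = 0 := by
        intro W hW
        induction hW using Submodule.span_induction with
        | mem z hz =>
            obtain ⟨t, c, rfl⟩ := hz
            have e1 := psi_zero_of_pair B hM1 (mem_lcs_succ_left hY t) hZ' c
            have e2 := psi_zero_of_pair B hM1 (mem_lcs_succ_left hY c) hZ' t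
            have e3 := hR1 Y hY ⁅Z, t⁆ (mem_lcs_succ_left hZ t) c
            have e4 := hR1 Y hY ⁅Z, c⁆ (mem_lcs_succ_left hZ c) t
            have j1 : ⁅Y, ⁅t, c⁆⁆ = ⁅⁅Y, t⁆, c⁆ + -⁅⁅Y, c⁆, t⁆ := by
              rw [lie_skew]; exact leibniz_lie Y t c
            have j2 : ⁅Z, ⁅t, c⁆⁆ = ⁅⁅Z, t⁆, c⁆ + -⁅⁅Z, c⁆, t⁆ := by
              rw [lie_skew]; exact leibniz_lie Z t c
            rw [j1, j2]
            simp only [map_add, map_neg, LinearMap.add_apply, LinearMap.neg_apply]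
            have s1 := hsymm ⁅Z, c⁆ ⁅Y, t⁆
            have s2 := hsymm ⁅Z, t⁆ ⁅Y, c⁆
            linarith
        | zero => simp
        | add x y hx hy ihx ihy =>
            simp only [lie_add, map_add, LinearMap.add_apply]
            linarith
        | smul a x hx ihx =>
            simp only [lie_smul, map_smul, LinearMap.smul_apply, smul_eq_mul]
            linear_combination a * ihx
      obtain ⟨u, hu, hrep⟩ :=
        psi_rep B hsymm hGO (lcs_le_derived hi hY) (lcs_le_derived (by omega) hZ)
      have hu0 : u = 0 := hnd' u hu fun W hW => by rw [← hrep W]; exact hstep1 W hW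
      intro w
      rw [hrep w, hu0]
      simp

/-- Downward induction: the diagonal functionals vanish on every positive level. -/
lemma Mall (hsymm : ∀ X Y : n, B X Y = B Y X) (hGO : IsGO B)
    (hnd' : ∀ X ∈ derived n, (∀ Y ∈ derived n, B X Y = 0) → X = 0) :
    ∀ s i, 1 ≤ i → lcs (i + s) = ⊥ →
      ∀ Y ∈ lcs i, ∀ w : n, B ⁅Y, w⁆ Y = 0 := by
  intro s
  induction s with
  | zero =>
      intro i _ hbot Y hY w
      rw [Nat.add_zero] at hbot
      rw [hbot] at hY
      have hY0 : Y = 0 := (LieSubmodule.mem_bot _).mp hY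
      subst hY0
      simp
  | succ s ih =>
      intro i hi hbot Y hY w
      have hbot' : lcs (i + 1 + s) = ⊥ := by
        rw [show i + 1 + s = i + (s + 1) by omega]; exact hbot
      have hM1 : ∀ U ∈ lcs (i + 1), ∀ w : n, B ⁅U, w⁆ U = 0 :=
        ih (i + 1) (by omega) hbot'
      have hR := Rall B hsymm hGO hnd' hi hM1 s (i + 1) le_rfl hbot'
      have hstep1 : ∀ W ∈ derived n, B ⁅Y, W⁆ Y = 0 := by
        intro W hW
        induction hW using Submodule.span_induction with
        | mem z hz =>
            obtain ⟨t, c, rfl⟩ := hz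
            have e1 := hR Y hY ⁅Y, t⁆ (mem_lcs_succ_left hY t) c
            have e2 := hR Y hY ⁅Y, c⁆ (mem_lcs_succ_left hY c) t
            have j1 : ⁅Y, ⁅t, c⁆⁆ = ⁅⁅Y, t⁆, c⁆ + -⁅⁅Y, c⁆, t⁆ := by
              rw [lie_skew]; exact leibniz_lie Y t c
            rw [j1]
            simp only [map_add, map_neg, LinearMap.add_apply, LinearMap.neg_apply]
            have s1 := hsymm ⁅Y, c⁆ ⁅Y, t⁆
            linarith
        | zero => simp
        | add x y hx hy ihx ihy =>
            simp only [lie_add, map_add, LinearMap.add_apply]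
            linarith
        | smul a x hx ihx =>
            simp only [lie_smul, map_smul, LinearMap.smul_apply, smul_eq_mul]
            linear_combination a * ihx
      obtain ⟨u, hu, hrep⟩ := exq B hsymm hGO (lcs_le_derived hi hY)
      have hu0 : u = 0 := hnd' u hu fun W hW => by rw [← hrep W]; exact hstep1 W hW
      rw [hrep w, hu0]
      simp

end Stmt7Aux

/-- if the GO condition holds and the restriction of the form to the derived
algebra is nondegenerate, then `⟨[T,X], X⟩ = 0` for all `T ∈ 𝔫` and `X ∈ [𝔫,𝔫]`. -/
theorem stmt7 {n : Type*} [LieRing n] [LieAlgebra ℝ n] [FiniteDimensional ℝ n]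
    [LieRing.IsNilpotent n] (B : LinearMap.BilinForm ℝ n)
    (hsymm : ∀ X Y : n, B X Y = B Y X)
    (hnondeg : ∀ X : n, (∀ Y : n, B X Y = 0) → X = 0)
    (hGO : IsGO B)
    (hnondeg' : ∀ X ∈ derived n, (∀ Y ∈ derived n, B X Y = 0) → X = 0) :
    ∀ T : n, ∀ X ∈ derived n, B ⁅T, X⁆ X = 0 := by
  obtain ⟨K, hK⟩ := LieModule.IsNilpotent.nilpotent ℝ n n
  have hbot : LieModule.lowerCentralSeries ℝ n n (1 + K) = ⊥ :=
    le_bot_iff.mp (hK ▸ LieModule.antitone_lowerCentralSeries ℝ n n (by omega : K ≤ 1 + K))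
  have hM := Stmt7Aux.Mall B hsymm hGO hnondeg' K 1 le_rfl hbot
  intro T X hX
  have h := hM X (Stmt7Aux.derived_le_lcs_one hX) T
  rw [(lie_skew T X).symm, map_neg, LinearMap.neg_apply, h, neg_zero]
end

section
/- Let (𝔫, ⟨·,·⟩) be a metric Lie algebra with 𝔫 nilpotent, satisfying the GO condition, and suppose the restriction of ⟨·,·⟩ to [𝔫,𝔫] is nondegenerate; let 𝔳 = [𝔫,𝔫]^⊥. Then for every X ∈ [𝔫,𝔫] and Y ∈ 𝔳 with ⟨X+Y, X+Y⟩ ≠ 0, there exists a skew-symmetric derivation A of (𝔫, ⟨·,·⟩) such that A(X) = [X,Y] (equivalently A(X) + [Y,X] = 0) and ⟨A(Y), Y'⟩ = ⟨[Y,Y'], X⟩ for all Y' ∈ 𝔳. -/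
/-!
Write `𝔡 = [𝔫,𝔫]` and `𝔳 = 𝔡^⊥`. Testing the GO condition at `c ∈ 𝔡` against `y ∈ 𝔳` gives
`⟨[y,c], c⟩ = 0`, so `ad y` is skew on `𝔡` for `y ∈ 𝔳`. The elements whose adjoint is skew on the
ideal `𝔡` form a Lie subalgebra; it contains `𝔳`, and `𝔫 = 𝔳 ⊕ 𝔡`. In a nilpotent Lie algebra a
subalgebra supplementing `[𝔫,𝔫]` is everything, so `ad w` is skew on `𝔡` for every `w`.
At `T = X + Y` the GO constant vanishes because `⟨T,T⟩ ≠ 0`, and testing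
`⟨[T,T'] + A T', T⟩ = 0` against `T' ∈ 𝔡` and `T' ∈ 𝔳` gives the two identities.
-/

open LieModule

namespace LieSubalgebra

variable {R L : Type*} [CommRing R] [LieRing L] [LieAlgebra R L]

def skewAd (B : LinearMap.BilinForm R L) (I : LieIdeal R L) : LieSubalgebra R L where
  carrier := {w | ∀ a ∈ I, ∀ b ∈ I, B ⁅w, a⁆ b + B a ⁅w, b⁆ = 0}
  add_mem' {u v} hu hv a ha b hb := by
    have hua := hu a ha b hb
    have hva := hv a ha b hb
    simp only [add_lie, map_add, LinearMap.add_apply]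
    linear_combination hua + hva
  zero_mem' a _ b _ := by simp
  smul_mem' c u hu a ha b hb := by
    simp only [smul_lie, map_smul, LinearMap.smul_apply, smul_eq_mul]
    linear_combination c * hu a ha b hb
  lie_mem' {u v} hu hv a ha b hb := by
    have h₁ := hu ⁅v, a⁆ (I.lie_mem ha) b hb
    have h₂ := hv ⁅u, a⁆ (I.lie_mem ha) b hb
    have h₃ := hu a ha ⁅v, b⁆ (I.lie_mem hb)
    have h₄ := hv a ha ⁅u, b⁆ (I.lie_mem hb)
    simp only [lie_lie, map_sub, LinearMap.sub_apply]
    linear_combination h₁ - h₂ + h₃ - h₄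

theorem lie_mem_sup_lie_of_sup_eq_top (K : LieSubalgebra R L) {I : LieIdeal R L}
    (hI : K.toSubmodule ⊔ I.toSubmodule = ⊤) (x y : L) :
    ⁅x, y⁆ ∈ K.toSubmodule ⊔ (⁅(⊤ : LieIdeal R L), I⁆ : LieIdeal R L).toSubmodule := by
  have hlie : ∀ z, ∀ c ∈ I, ⁅z, c⁆ ∈ (⁅(⊤ : LieIdeal R L), I⁆ : LieIdeal R L) := fun z c hc =>
    LieSubmodule.lie_mem_lie (LieSubmodule.mem_top z) hc
  obtain ⟨s, hs, c, hc, rfl⟩ := Submodule.mem_sup.1 (hI ▸ Submodule.mem_top : x ∈ _)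
  obtain ⟨t, ht, d, hd, rfl⟩ := Submodule.mem_sup.1 (hI ▸ Submodule.mem_top : y ∈ _)
  have hct : ⁅c, t⁆ ∈ (⁅(⊤ : LieIdeal R L), I⁆ : LieIdeal R L) := by
    rw [← lie_skew]; exact neg_mem (hlie t c hc)
  rw [add_lie, lie_add, lie_add, add_assoc]
  refine Submodule.add_mem_sup (K.lie_mem hs ht) ?_
  exact add_mem (hlie s d hd) (add_mem hct (hlie c d hd))

theorem sup_lowerCentralSeries_eq_top (K : LieSubalgebra R L)
    (hK : K.toSubmodule ⊔ (lowerCentralSeries R L L 1).toSubmodule = ⊤) (k : ℕ) :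
    K.toSubmodule ⊔ (lowerCentralSeries R L L k).toSubmodule = ⊤ := by
  induction k with
  | zero => simp
  | succ k ih =>
    have hle : (lowerCentralSeries R L L 1).toSubmodule ≤
        K.toSubmodule ⊔ (lowerCentralSeries R L L (k + 1)).toSubmodule := by
      rw [lowerCentralSeries_succ, LieSubmodule.lieIdeal_oper_eq_linear_span', Submodule.span_le]
      rintro _ ⟨x, -, y, -, rfl⟩
      rw [lowerCentralSeries_succ]
      exact K.lie_mem_sup_lie_of_sup_eq_top ih x y
    exact top_le_iff.1 (hK ▸ sup_le le_sup_left hle)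

theorem eq_top_of_sup_lowerCentralSeries_one_eq_top [LieRing.IsNilpotent L]
    (K : LieSubalgebra R L)
    (hK : K.toSubmodule ⊔ (lowerCentralSeries R L L 1).toSubmodule = ⊤) : K = ⊤ := by
  obtain ⟨k, hk⟩ := IsNilpotent.nilpotent R L L
  simpa [hk] using K.sup_lowerCentralSeries_eq_top hK k

end LieSubalgebra

section MetricLieAlgebra

variable {n : Type*} [LieRing n] [LieAlgebra ℝ n] {B : LinearMap.BilinForm ℝ n}

theorem lie_mem_derived (x y : n) : ⁅x, y⁆ ∈ derived n :=
  Submodule.subset_span ⟨x, y, rfl⟩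

variable (n) in
theorem coe_lowerCentralSeries_one_eq_derived :
    (lowerCentralSeries ℝ n n 1).toSubmodule = derived n := by
  rw [lowerCentralSeries_succ, LieSubmodule.lieIdeal_oper_eq_linear_span', derived]
  simp

theorem derived_le_comap_of_leibniz {D : n →ₗ[ℝ] n}
    (hD : ∀ X Y : n, D ⁅X, Y⁆ = ⁅D X, Y⁆ + ⁅X, D Y⁆) : derived n ≤ (derived n).comap D :=
  Submodule.span_le.2 <| by
    rintro _ ⟨x, y, rfl⟩
    rw [SetLike.mem_coe, Submodule.mem_comap, hD]
    exact add_mem (lie_mem_derived _ _) (lie_mem_derived _ _)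

theorem IsGO.apply_lie_self_eq_zero (hsymm : ∀ X Y : n, B X Y = B Y X) (hGO : IsGO B)
    {y c : n} (hy : ∀ X' ∈ derived n, B y X' = 0) (hc : c ∈ derived n) :
    B ⁅y, c⁆ c = 0 := by
  obtain ⟨A, k, ⟨hder, hskew⟩, hA⟩ := hGO c
  have hyAc : B y (A c) = 0 := hy _ (derived_le_comap_of_leibniz hder hc)
  have hcy : B c y = 0 := hsymm c y ▸ hy c hc
  have hGOy := hA y
  have hskew_yc := hskew y c
  rw [← lie_skew, map_neg, LinearMap.neg_apply]
  simp only [map_add, LinearMap.add_apply, hcy, mul_zero] at hGOy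
  linarith

theorem IsGO.mem_skewAd (hsymm : ∀ X Y : n, B X Y = B Y X) (hGO : IsGO B)
    {y : n} (hy : ∀ X' ∈ derived n, B y X' = 0) :
    y ∈ LieSubalgebra.skewAd B (lowerCentralSeries ℝ n n 1) := by
  intro a ha b hb
  replace ha : a ∈ derived n := coe_lowerCentralSeries_one_eq_derived n ▸ ha
  replace hb : b ∈ derived n := coe_lowerCentralSeries_one_eq_derived n ▸ hb
  have hab := hGO.apply_lie_self_eq_zero hsymm hy (add_mem ha hb)
  have haa := hGO.apply_lie_self_eq_zero hsymm hy ha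
  have hbb := hGO.apply_lie_self_eq_zero hsymm hy hb
  simp only [lie_add, map_add, LinearMap.add_apply] at hab
  rw [hsymm a]
  linarith

theorem IsGO.skewAd_eq_top [FiniteDimensional ℝ n] [LieRing.IsNilpotent n]
    (hsymm : ∀ X Y : n, B X Y = B Y X) (hGO : IsGO B)
    (hnondeg' : ∀ X ∈ derived n, (∀ Y ∈ derived n, B X Y = 0) → X = 0) :
    LieSubalgebra.skewAd B (lowerCentralSeries ℝ n n 1) = ⊤ := by
  have hrestrict : (B.restrict (derived n)).Nondegenerate :=
    .ofSeparatingLeft fun x hx => Subtype.ext <| hnondeg' x x.2 fun y hy => hx ⟨y, hy⟩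
  have hcompl := B.isCompl_orthogonal_of_restrict_nondegenerate
    (fun x y hxy => (hsymm x y ▸ hxy : B y x = 0)) hrestrict
  refine LieSubalgebra.eq_top_of_sup_lowerCentralSeries_one_eq_top _ ?_
  rw [coe_lowerCentralSeries_one_eq_derived n, sup_comm, eq_top_iff]
  refine hcompl.codisjoint.top_le.trans (sup_le_sup_left ?_ _)
  exact fun y hy => hGO.mem_skewAd hsymm fun X' hX' => hsymm y X' ▸ hy X' hX'

theorem IsGO.apply_lie_add_apply_lie_eq_zero [FiniteDimensional ℝ n] [LieRing.IsNilpotent n]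
    (hsymm : ∀ X Y : n, B X Y = B Y X) (hGO : IsGO B)
    (hnondeg' : ∀ X ∈ derived n, (∀ Y ∈ derived n, B X Y = 0) → X = 0)
    (w : n) {a b : n} (ha : a ∈ derived n) (hb : b ∈ derived n) :
    B ⁅w, a⁆ b + B a ⁅w, b⁆ = 0 := by
  have hw := hGO.skewAd_eq_top hsymm hnondeg' ▸ LieSubalgebra.mem_top w
  rw [← coe_lowerCentralSeries_one_eq_derived n] at ha hb
  exact hw a ha b hb

theorem IsGO.exists_skewDeriv_of_ne_zero (hsymm : ∀ X Y : n, B X Y = B Y X) (hGO : IsGO B)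
    {T : n} (hT : B T T ≠ 0) :
    ∃ A : n →ₗ[ℝ] n, IsSkewDeriv B A ∧ ∀ T', B (⁅T, T'⁆ + A T') T = 0 := by
  obtain ⟨A, k, hA, hk⟩ := hGO T
  have hATT : B (A T) T = 0 := by
    have h := hA.2 T T
    rw [hsymm T (A T)] at h
    linarith
  have hk0 : k = 0 := by
    have h := hk T
    rw [lie_self, zero_add, hATT] at h
    exact (mul_eq_zero.1 h.symm).resolve_right hT
  exact ⟨A, hA, fun T' => by rw [hk T', hk0, zero_mul]⟩

theorem IsGO.apply_eq_lie [FiniteDimensional ℝ n] [LieRing.IsNilpotent n]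
    (hsymm : ∀ X Y : n, B X Y = B Y X) (hGO : IsGO B)
    (hnondeg' : ∀ X ∈ derived n, (∀ Y ∈ derived n, B X Y = 0) → X = 0)
    {A : n →ₗ[ℝ] n} (hA : IsSkewDeriv B A) {X Y : n} (hX : X ∈ derived n)
    (hY : ∀ X' ∈ derived n, B Y X' = 0) (hAT : ∀ T', B (⁅X + Y, T'⁆ + A T') (X + Y) = 0) :
    A X = ⁅X, Y⁆ := by
  have hAder := derived_le_comap_of_leibniz hA.1
  refine sub_eq_zero.1 <| hnondeg' _ (sub_mem (hAder hX) (lie_mem_derived X Y)) fun b hb => ?_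
  have h := hAT b
  have hXb := hGO.apply_lie_add_apply_lie_eq_zero hsymm hnondeg' X hb hX
  have hYb := hGO.apply_lie_add_apply_lie_eq_zero hsymm hnondeg' Y hb hX
  have hAbX := hA.2 b X
  have hXbY : B ⁅X, b⁆ Y = 0 := hsymm _ _ ▸ hY _ (lie_mem_derived _ _)
  have hYbY : B ⁅Y, b⁆ Y = 0 := hsymm _ _ ▸ hY _ (lie_mem_derived _ _)
  have hAbY : B (A b) Y = 0 := hsymm _ _ ▸ hY _ (hAder hb)
  rw [lie_self, map_zero, add_zero] at hXb
  simp only [add_lie, map_add, LinearMap.add_apply] at h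
  rw [← lie_skew X Y, sub_neg_eq_add, map_add, LinearMap.add_apply, hsymm (A X), hsymm ⁅Y, X⁆]
  linarith

theorem IsGO.apply_apply_eq_apply_lie (hsymm : ∀ X Y : n, B X Y = B Y X) (hGO : IsGO B)
    {A : n →ₗ[ℝ] n} (hA : IsSkewDeriv B A) {X Y Y' : n} (hX : X ∈ derived n)
    (hY : ∀ X' ∈ derived n, B Y X' = 0) (hY' : ∀ X' ∈ derived n, B Y' X' = 0)
    (hAT : ∀ T', B (⁅X + Y, T'⁆ + A T') (X + Y) = 0) :
    B (A Y) Y' = B ⁅Y, Y'⁆ X := by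
  have h := hAT Y'
  have hY'XX : B ⁅Y', X⁆ X = 0 := hGO.apply_lie_self_eq_zero hsymm hY' hX
  have hXY'Y : B ⁅X, Y'⁆ Y = 0 := hsymm _ _ ▸ hY _ (lie_mem_derived _ _)
  have hYY'Y : B ⁅Y, Y'⁆ Y = 0 := hsymm _ _ ▸ hY _ (lie_mem_derived _ _)
  have hAY'X : B (A Y') X = 0 := by
    have := hA.2 Y' X
    rw [hY' _ (derived_le_comap_of_leibniz hA.1 hX)] at this
    linarith
  have hAY'Y := hA.2 Y' Y
  rw [← lie_skew, map_neg, LinearMap.neg_apply] at hY'XX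
  simp only [add_lie, map_add, LinearMap.add_apply] at h
  rw [hsymm Y' (A Y)] at hAY'Y
  linarith

end MetricLieAlgebra

theorem stmt8_general {n : Type*} [LieRing n] [LieAlgebra ℝ n] [FiniteDimensional ℝ n]
    [LieRing.IsNilpotent n] (B : LinearMap.BilinForm ℝ n)
    (hsymm : ∀ X Y : n, B X Y = B Y X)
    (hGO : IsGO B)
    (hnondeg' : ∀ X ∈ derived n, (∀ Y ∈ derived n, B X Y = 0) → X = 0) :
    ∀ X ∈ derived n, ∀ Y ∈ {Y : n | ∀ X' ∈ derived n, B Y X' = 0},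
      B (X + Y) (X + Y) ≠ 0 →
      ∃ A : n →ₗ[ℝ] n, IsSkewDeriv B A ∧ A X = ⁅X, Y⁆ ∧
        ∀ Y' ∈ {Y' : n | ∀ X' ∈ derived n, B Y' X' = 0}, B (A Y) Y' = B ⁅Y, Y'⁆ X := by
  intro X hX Y hY hT
  obtain ⟨A, hA, hAT⟩ := hGO.exists_skewDeriv_of_ne_zero hsymm hT
  exact ⟨A, hA, hGO.apply_eq_lie hsymm hnondeg' hA hX hY hAT,
    fun Y' hY' => hGO.apply_apply_eq_apply_lie hsymm hA hX hY hY' hAT⟩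

/-- existence of the derivation `A` in equations (4)-(5) of the paper. -/
theorem stmt8 {n : Type*} [LieRing n] [LieAlgebra ℝ n] [FiniteDimensional ℝ n]
    [LieRing.IsNilpotent n] (B : LinearMap.BilinForm ℝ n)
    (hsymm : ∀ X Y : n, B X Y = B Y X)
    (hnondeg : ∀ X : n, (∀ Y : n, B X Y = 0) → X = 0)
    (hGO : IsGO B)
    (hnondeg' : ∀ X ∈ derived n, (∀ Y ∈ derived n, B X Y = 0) → X = 0) :
    ∀ X ∈ derived n, ∀ Y ∈ {Y : n | ∀ X' ∈ derived n, B Y X' = 0},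
      B (X + Y) (X + Y) ≠ 0 →
      ∃ A : n →ₗ[ℝ] n, IsSkewDeriv B A ∧ A X = ⁅X, Y⁆ ∧
        ∀ Y' ∈ {Y' : n | ∀ X' ∈ derived n, B Y' X' = 0}, B (A Y) Y' = B ⁅Y, Y'⁆ X :=
  stmt8_general B hsymm hGO hnondeg'
end
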